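/- arXiv:2004.14138 — 11 statements merged into one kernel-verified Lean document; each statement's English description precedes it below -/
import Mathlib

section
/- The class of finite Δ-metric spaces has the strong amalgamation property: if A, B, C are finite Δ-metric spaces with A a subspace of both B and C, then there is a Δ-metric space D containing isometric copies of B and C whose intersection is exactly the copy of A. -/
structure DistanceValueSet (Δ : Set ℝ) : Prop where
  nonempty : Δ.Nonempty
  pos : ∀ d ∈ Δ, 0 < d
  closed_bdd : BddAbove Δ → ∀ x ∈ Δ, ∀ y ∈ Δ, min (x + y) (sSup Δ) ∈ Δ
  closed_unbdd : ¬BddAbove Δ → ∀ x ∈ Δ, ∀ y ∈ Δ, x + y ∈ Δ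

def IsDeltaMetric (Δ : Set ℝ) (X : Type*) [MetricSpace X] : Prop :=
  ∀ x y : X, x ≠ y → dist x y ∈ Δ

/-!
Glue `B` and `C` along `A`: the distance from `b ∈ B` to `c ∈ C ∖ A` is the length of the
shortest path through `A`, truncated at a value `M ∈ Δ` bounding all distances in `B` and `C`
(so for empty `A` every cross distance is `M`). The triangle inequality is inherited from `B`
and `C`, and the new distances lie in `Δ` as soon as `min (x + y) M ∈ Δ` for all `x y ∈ Δ`.
Such an `M` exists: for bounded `Δ` take `M = sup Δ`, which lies in `Δ`; for unbounded `Δ`,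
which is then closed under addition, any large enough `M ∈ Δ` works.
-/

namespace DistanceValueSet

variable {Δ : Set ℝ}

theorem sSup_mem (hΔ : DistanceValueSet Δ) (hbdd : BddAbove Δ) : sSup Δ ∈ Δ := by
  -- `min (x + δ) (sSup Δ) = sSup Δ` for any `x ∈ Δ` within `δ ∈ Δ` of the supremum
  obtain ⟨δ, hδ⟩ := hΔ.nonempty
  have hδpos := hΔ.pos δ hδ
  obtain ⟨x, hx, hδx⟩ : ∃ x ∈ Δ, sSup Δ - δ < x := by
    rcases lt_or_ge (sSup Δ - δ) δ with h | h
    · exact ⟨δ, hδ, h⟩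
    · exact exists_lt_of_lt_csSup hΔ.nonempty (by linarith)
  have hmem := hΔ.closed_bdd hbdd x hx δ hδ
  rwa [min_eq_right (by linarith)] at hmem

theorem exists_min_add_mem (hΔ : DistanceValueSet Δ) {s : Set ℝ} (hs : s ⊆ Δ)
    (hbdd : BddAbove s) :
    ∃ M ∈ Δ, M ∈ upperBounds s ∧ ∀ x ∈ Δ, ∀ y ∈ Δ, min (x + y) M ∈ Δ := by
  by_cases hΔbdd : BddAbove Δ
  · exact ⟨sSup Δ, hΔ.sSup_mem hΔbdd, fun x hx => le_csSup hΔbdd (hs hx),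
      hΔ.closed_bdd hΔbdd⟩
  · obtain ⟨r, hr⟩ := hbdd
    obtain ⟨M, hM, hrM⟩ := not_bddAbove_iff.1 hΔbdd r
    refine ⟨M, hM, fun x hx => (hr hx).trans hrM.le, fun x hx y hy => ?_⟩
    rcases min_choice (x + y) M with h | h <;> rw [h]
    exacts [hΔ.closed_unbdd hΔbdd x hx y hy, hM]

theorem exists_dist_le_of_finite (hΔ : DistanceValueSet Δ) {B C : Type*}
    [MetricSpace B] [MetricSpace C] [Finite B] [Finite C]
    (hB : IsDeltaMetric Δ B) (hC : IsDeltaMetric Δ C) :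
    ∃ M ∈ Δ, (∀ x y : B, dist x y ≤ M) ∧ (∀ x y : C, dist x y ≤ M) ∧
      ∀ x ∈ Δ, ∀ y ∈ Δ, min (x + y) M ∈ Δ := by
  set s := ((Set.range fun p : B × B => dist p.1 p.2) ∪
    Set.range fun p : C × C => dist p.1 p.2) ∩ Δ
  obtain ⟨M, hM, hsM, hmin⟩ := hΔ.exists_min_add_mem (s := s) Set.inter_subset_right
    ((Set.finite_range _).union (Set.finite_range _)).bddAbove.inter_of_left
  have hMpos := hΔ.pos M hM
  refine ⟨M, hM, fun x y => ?_, fun x y => ?_, hmin⟩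
  · rcases eq_or_ne x y with rfl | hxy
    · simpa using hMpos.le
    · exact hsM ⟨Or.inl ⟨(x, y), rfl⟩, hB x y hxy⟩
  · rcases eq_or_ne x y with rfl | hxy
    · simpa using hMpos.le
    · exact hsM ⟨Or.inr ⟨(x, y), rfl⟩, hC x y hxy⟩

end DistanceValueSet

namespace Amalgam

open Finset

section CrossDist

variable {A B C : Type*} [PseudoMetricSpace B] [PseudoMetricSpace C]
  [Fintype A] (iB : A → B) (iC : A → C) (M : ℝ)

noncomputable def crossDist (b : B) (c : C) : ℝ :=
  (insert M (univ.image fun a => dist b (iB a) + dist (iC a) c)).min' (insert_nonempty _ _)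

theorem crossDist_le_bound (b : B) (c : C) : crossDist iB iC M b c ≤ M :=
  min'_le _ _ (mem_insert_self _ _)

theorem crossDist_le_add (b : B) (c : C) (a : A) :
    crossDist iB iC M b c ≤ dist b (iB a) + dist (iC a) c :=
  min'_le _ _ (mem_insert_of_mem (mem_image_of_mem _ (mem_univ a)))

theorem crossDist_eq_bound_or_exists (b : B) (c : C) :
    crossDist iB iC M b c = M ∨ ∃ a, crossDist iB iC M b c = dist b (iB a) + dist (iC a) c := by
  have h := min'_mem _ (insert_nonempty M (univ.image fun a => dist b (iB a) + dist (iC a) c))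
  rcases mem_insert.1 h with h | h
  · exact Or.inl h
  · obtain ⟨a, -, ha⟩ := mem_image.1 h
    exact Or.inr ⟨a, ha.symm⟩

variable {iB iC M}

theorem crossDist_comm (b : B) (c : C) : crossDist iB iC M b c = crossDist iC iB M c b := by
  simp only [crossDist, dist_comm b, dist_comm _ c, add_comm (dist (iB _) b)]

theorem crossDist_nonneg (hM : 0 ≤ M) (b : B) (c : C) : 0 ≤ crossDist iB iC M b c := by
  rcases crossDist_eq_bound_or_exists iB iC M b c with h | ⟨a, h⟩ <;> rw [h]
  exacts [hM, by positivity]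

theorem crossDist_le_dist_add (b b' : B) (c : C) :
    crossDist iB iC M b c ≤ dist b b' + crossDist iB iC M b' c := by
  rcases crossDist_eq_bound_or_exists iB iC M b' c with h | ⟨a, h⟩ <;> rw [h]
  · linarith [crossDist_le_bound iB iC M b c, dist_nonneg (x := b) (y := b')]
  · linarith [crossDist_le_add iB iC M b c a, dist_triangle b b' (iB a)]

theorem crossDist_le_add_dist (b : B) (c c' : C) :
    crossDist iB iC M b c ≤ crossDist iB iC M b c' + dist c' c := by
  rw [crossDist_comm, crossDist_comm b, add_comm, dist_comm]
  exact crossDist_le_dist_add c c' b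

theorem dist_le_crossDist_add_crossDist [PseudoMetricSpace A] (hiB : Isometry iB)
    (hiC : Isometry iC) (hMB : ∀ x y : B, dist x y ≤ M) (b b' : B) (c : C) :
    dist b b' ≤ crossDist iB iC M b c + crossDist iB iC M b' c := by
  have hM : 0 ≤ M := dist_nonneg.trans (hMB b b)
  rcases crossDist_eq_bound_or_exists iB iC M b c with h | ⟨a, h⟩
  · linarith [crossDist_nonneg (iB := iB) (iC := iC) hM b' c, hMB b b']
  rcases crossDist_eq_bound_or_exists iB iC M b' c with h' | ⟨a', h'⟩
  · linarith [crossDist_nonneg (iB := iB) (iC := iC) hM b c, hMB b b']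
  have hpath : dist (iB a) (iB a') ≤ dist (iC a) c + dist c (iC a') := by
    rw [hiB.dist_eq, ← hiC.dist_eq]
    exact dist_triangle _ _ _
  linarith [dist_triangle4 b (iB a) (iB a') b', dist_comm (iB a') b', dist_comm c (iC a')]

theorem dist_le_crossDist_add_crossDist' [PseudoMetricSpace A] (hiB : Isometry iB)
    (hiC : Isometry iC) (hMC : ∀ x y : C, dist x y ≤ M) (b : B) (c c' : C) :
    dist c c' ≤ crossDist iB iC M b c + crossDist iB iC M b c' := by
  rw [crossDist_comm, crossDist_comm b]
  exact dist_le_crossDist_add_crossDist hiC hiB hMC c c' b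

theorem crossDist_iB [PseudoMetricSpace A] (hiB : Isometry iB) (hiC : Isometry iC)
    (hMC : ∀ x y : C, dist x y ≤ M) (a : A) (c : C) :
    crossDist iB iC M (iB a) c = dist (iC a) c := by
  refine le_antisymm (by simpa using crossDist_le_add iB iC M (iB a) c a) ?_
  refine le_min' _ _ _ fun y hy => ?_
  rcases mem_insert.1 hy with rfl | hy
  · exact hMC _ _
  · obtain ⟨a', -, rfl⟩ := mem_image.1 hy
    rw [hiB.dist_eq, ← hiC.dist_eq]
    exact dist_triangle _ _ _

end CrossDist

section Embed

variable {A B C : Type*} {iB : A → B} {iC : A → C}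

variable (iB iC) in
open Classical in
noncomputable def embedC (c : C) : B ⊕ {c : C // c ∉ Set.range iC} :=
  if h : c ∈ Set.range iC then .inl (iB h.choose) else .inr ⟨c, h⟩

theorem embedC_apply (hiC : Function.Injective iC) (a : A) :
    embedC iB iC (iC a) = .inl (iB a) := by
  have h : iC a ∈ Set.range iC := ⟨a, rfl⟩
  rw [embedC, dif_pos h, hiC h.choose_spec]

theorem embedC_of_notMem {c : C} (hc : c ∉ Set.range iC) : embedC iB iC c = .inr ⟨c, hc⟩ :=
  dif_neg hc

theorem range_inl_inter_range_embedC (hiC : Function.Injective iC) :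
    Set.range Sum.inl ∩ Set.range (embedC iB iC) = Set.range (Sum.inl ∘ iB) := by
  refine subset_antisymm ?_ ?_
  · rintro _ ⟨⟨b, rfl⟩, c, hbc⟩
    by_cases hc : c ∈ Set.range iC
    · obtain ⟨a, rfl⟩ := hc
      rw [embedC_apply hiC, Sum.inl.injEq] at hbc
      exact ⟨a, congrArg Sum.inl hbc⟩
    · simp [embedC_of_notMem hc] at hbc
  · rintro _ ⟨a, rfl⟩
    exact ⟨⟨iB a, rfl⟩, iC a, embedC_apply hiC a⟩

end Embed

section Glue

variable {A B C : Type*} [MetricSpace B] [MetricSpace C] [Fintype A]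
  {iB : A → B} {iC : A → C} {M : ℝ}

theorem crossDist_pos (hM : 0 < M) (b : B) {c : C} (hc : c ∉ Set.range iC) :
    0 < crossDist iB iC M b c := by
  rcases crossDist_eq_bound_or_exists iB iC M b c with h | ⟨a, h⟩ <;> rw [h]
  · exact hM
  · have : 0 < dist (iC a) c := dist_pos.2 fun hac => hc ⟨a, hac⟩
    positivity

theorem crossDist_mem {Δ : Set ℝ} (hB : IsDeltaMetric Δ B) (hC : IsDeltaMetric Δ C)
    (hM : M ∈ Δ) (hmin : ∀ x ∈ Δ, ∀ y ∈ Δ, min (x + y) M ∈ Δ) (b : B) {c : C}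
    (hc : c ∉ Set.range iC) : crossDist iB iC M b c ∈ Δ := by
  rcases crossDist_eq_bound_or_exists iB iC M b c with h | ⟨a, h⟩ <;> rw [h]
  · exact hM
  have hac : dist (iC a) c ∈ Δ := hC _ _ fun hac => hc ⟨a, hac⟩
  rcases eq_or_ne b (iB a) with rfl | hba
  · simpa using hac
  · have hle : dist b (iB a) + dist (iC a) c ≤ M := h ▸ crossDist_le_bound iB iC M b c
    simpa [min_eq_left hle] using hmin _ (hB _ _ hba) _ hac

variable (iB iC M) in
noncomputable def gluedDist :
    B ⊕ {c : C // c ∉ Set.range iC} → B ⊕ {c : C // c ∉ Set.range iC} → ℝ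
  | .inl b, .inl b' => dist b b'
  | .inl b, .inr c => crossDist iB iC M b c
  | .inr c, .inl b => crossDist iB iC M b c
  | .inr c, .inr c' => dist (c : C) c'

theorem gluedDist_triangle [PseudoMetricSpace A] (hiB : Isometry iB) (hiC : Isometry iC)
    (hMB : ∀ x y : B, dist x y ≤ M) (hMC : ∀ x y : C, dist x y ≤ M)
    (x y z : B ⊕ {c : C // c ∉ Set.range iC}) :
    gluedDist iB iC M x z ≤ gluedDist iB iC M x y + gluedDist iB iC M y z := by
  rcases x with b | c <;> rcases y with b' | c' <;> rcases z with b'' | c'' <;>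
    simp only [gluedDist]
  · exact dist_triangle b b' b''
  · exact crossDist_le_dist_add b b' (c'' : C)
  · exact dist_le_crossDist_add_crossDist hiB hiC hMB b b'' (c' : C)
  · exact crossDist_le_add_dist b (c'' : C) c'
  · rw [add_comm, dist_comm]
    exact crossDist_le_dist_add b'' b' (c : C)
  · exact dist_le_crossDist_add_crossDist' hiB hiC hMC b' (c : C) c''
  · rw [add_comm, dist_comm]
    exact crossDist_le_add_dist b'' (c : C) c'
  · exact dist_triangle (c : C) c' c''

theorem eq_of_gluedDist_eq_zero (hM : 0 < M) {x y : B ⊕ {c : C // c ∉ Set.range iC}}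
    (h : gluedDist iB iC M x y = 0) : x = y := by
  rcases x with b | c <;> rcases y with b' | c' <;> simp only [gluedDist] at h
  · rw [dist_eq_zero.1 h]
  · exact absurd h (crossDist_pos hM b c'.2).ne'
  · exact absurd h (crossDist_pos hM b' c.2).ne'
  · rw [Subtype.ext (dist_eq_zero.1 h)]

noncomputable abbrev metricSpace [PseudoMetricSpace A] (hiB : Isometry iB)
    (hiC : Isometry iC) (hM : 0 < M) (hMB : ∀ x y : B, dist x y ≤ M)
    (hMC : ∀ x y : C, dist x y ≤ M) :
    MetricSpace (B ⊕ {c : C // c ∉ Set.range iC}) where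
  dist := gluedDist iB iC M
  dist_self := by rintro (b | c) <;> simp [gluedDist]
  dist_comm := by rintro (b | c) (b' | c') <;> simp [gluedDist, dist_comm]
  dist_triangle := gluedDist_triangle hiB hiC hMB hMC
  eq_of_dist_eq_zero := eq_of_gluedDist_eq_zero hM

theorem gluedDist_mem {Δ : Set ℝ} (hB : IsDeltaMetric Δ B) (hC : IsDeltaMetric Δ C)
    (hM : M ∈ Δ) (hmin : ∀ x ∈ Δ, ∀ y ∈ Δ, min (x + y) M ∈ Δ)
    {x y : B ⊕ {c : C // c ∉ Set.range iC}}
    (hxy : x ≠ y) : gluedDist iB iC M x y ∈ Δ := by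
  rcases x with b | c <;> rcases y with b' | c' <;> simp only [gluedDist]
  · exact hB b b' fun h => hxy (congrArg _ h)
  · exact crossDist_mem hB hC hM hmin b c'.2
  · exact crossDist_mem hB hC hM hmin b' c.2
  · exact hC c c' fun h => hxy (congrArg _ (Subtype.ext h))

theorem gluedDist_embedC [MetricSpace A] (hiB : Isometry iB) (hiC : Isometry iC)
    (hMC : ∀ x y : C, dist x y ≤ M) (c c' : C) :
    gluedDist iB iC M (embedC iB iC c) (embedC iB iC c') = dist c c' := by
  by_cases hc : c ∈ Set.range iC <;> by_cases hc' : c' ∈ Set.range iC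
  · obtain ⟨a, rfl⟩ := hc
    obtain ⟨a', rfl⟩ := hc'
    simp only [embedC_apply hiC.injective, gluedDist, hiB.dist_eq, hiC.dist_eq]
  · obtain ⟨a, rfl⟩ := hc
    simp only [embedC_apply hiC.injective, embedC_of_notMem hc', gluedDist,
      crossDist_iB hiB hiC hMC]
  · obtain ⟨a', rfl⟩ := hc'
    simp only [embedC_apply hiC.injective, embedC_of_notMem hc, gluedDist,
      crossDist_iB hiB hiC hMC, dist_comm]
  · simp only [embedC_of_notMem hc, embedC_of_notMem hc', gluedDist]

end Glue

end Amalgam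

theorem stmt_0_general (Δ : Set ℝ) (hΔ : DistanceValueSet Δ)
    (A B C : Type) [MetricSpace A] [MetricSpace B] [MetricSpace C]
    [Finite A] [Finite B] [Finite C]
    (hB : IsDeltaMetric Δ B) (hC : IsDeltaMetric Δ C)
    (iB : A → B) (iC : A → C) (hiB : Isometry iB) (hiC : Isometry iC) :
    ∃ (D : Type) (_ : MetricSpace D) (jB : B → D) (jC : C → D),
      Finite D ∧ IsDeltaMetric Δ D ∧ Isometry jB ∧ Isometry jC ∧
      (∀ a : A, jB (iB a) = jC (iC a)) ∧
      Set.range jB ∩ Set.range jC = Set.range (jB ∘ iB) := by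
  have := Fintype.ofFinite A
  obtain ⟨M, hM, hMB, hMC, hmin⟩ := hΔ.exists_dist_le_of_finite hB hC
  let D := Amalgam.metricSpace hiB hiC (hΔ.pos M hM) hMB hMC
  refine ⟨_, D, Sum.inl, Amalgam.embedC iB iC, inferInstance,
    fun _ _ => Amalgam.gluedDist_mem hB hC hM hmin, Isometry.of_dist_eq fun _ _ => rfl,
    Isometry.of_dist_eq (Amalgam.gluedDist_embedC hiB hiC hMC),
    fun a => (Amalgam.embedC_apply hiC.injective a).symm,
    Amalgam.range_inl_inter_range_embedC hiC.injective⟩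

/-- Strong amalgamation for the class of finite Δ-metric spaces. -/
theorem stmt_0 (Δ : Set ℝ) (hΔ : DistanceValueSet Δ)
    (A B C : Type) [MetricSpace A] [MetricSpace B] [MetricSpace C]
    [Finite A] [Finite B] [Finite C]
    (hA : IsDeltaMetric Δ A) (hB : IsDeltaMetric Δ B) (hC : IsDeltaMetric Δ C)
    (iB : A → B) (iC : A → C) (hiB : Isometry iB) (hiC : Isometry iC) :
    ∃ (D : Type) (_ : MetricSpace D) (jB : B → D) (jC : C → D),
      Finite D ∧ IsDeltaMetric Δ D ∧ Isometry jB ∧ Isometry jC ∧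
      (∀ a : A, jB (iB a) = jC (iC a)) ∧
      Set.range jB ∩ Set.range jC = Set.range (jB ∘ iB) :=
  stmt_0_general Δ hΔ A B C hB hC iB iC hiB hiC
end

section
/- Let X be a finite Δ-metric space, Λ ≤ Γ finite groups, and π : Λ → Iso(X) an injective group homomorphism (an action of Λ on X by isometries). Then there is a finite Δ-metric space Y containing X isometrically and an injective group homomorphism π' : Γ → Iso(Y) such that for all γ ∈ Λ and x ∈ X, π'(γ)(x) = π(γ)(x). -/
instance SeparationQuotient.instIsIsometricSMul {M X : Type*} [PseudoEMetricSpace X] [SMul M X]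
    [IsIsometricSMul M X] : IsIsometricSMul M (SeparationQuotient X) where
  isometry_smul c := surjective_mk.forall₂.2 fun x y => by
    dsimp only
    rw [← mk_smul, ← mk_smul, edist_mk, edist_mk, edist_smul_left]

theorem SeparationQuotient.isometry_mk {α : Type*} [PseudoEMetricSpace α] :
    Isometry (mk : α → SeparationQuotient α) :=
  edist_mk

namespace IsometryEquiv

variable (G X : Type*) [Group G] [PseudoEMetricSpace X] [MulAction G X] [IsIsometricSMul G X]

@[simps]
def constSMulHom : G →* (X ≃ᵢ X) where
  toFun := constSMul
  map_one' := ext (one_smul G)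
  map_mul' a b := ext (mul_smul a b)

theorem constSMulHom_injective [FaithfulSMul G X] : Function.Injective (constSMulHom G X) :=
  fun _ _ h => smul_left_injective' (congrArg DFunLike.coe h)

end IsometryEquiv

section InducedDist

variable {X Γ : Type*} [MetricSpace X] [Group Γ] (Λ : Subgroup Γ) (π : Λ →* (X ≃ᵢ X)) (D : ℝ)

open scoped Classical in
/-- `inducedDist Λ π D x₁ x₂ (g₂⁻¹ * g₁)` is `δ((x₁, g₁), (x₂, g₂))`, with `D` in place of
`diam X`. -/
noncomputable def inducedDist (x y : X) (g : Γ) : ℝ :=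
  if h : g ∈ Λ then dist (π ⟨g, h⟩ x) y else D

variable {Λ π D}

theorem inducedDist_coe (l : Λ) (x y : X) : inducedDist Λ π D x y l = dist (π l x) y :=
  dif_pos l.2

theorem inducedDist_of_notMem {g : Γ} (hg : g ∉ Λ) (x y : X) : inducedDist Λ π D x y g = D :=
  dif_neg hg

theorem inducedDist_one (x y : X) : inducedDist Λ π D x y 1 = dist x y := by
  simpa using inducedDist_coe (Λ := Λ) (π := π) (D := D) 1 x y

theorem inducedDist_inv (x y : X) (g : Γ) :
    inducedDist Λ π D x y g⁻¹ = inducedDist Λ π D y x g := by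
  by_cases hg : g ∈ Λ
  · lift g to Λ using hg
    rw [← Subgroup.coe_inv, inducedDist_coe, inducedDist_coe, map_inv, dist_comm,
      ← (π g).dist_eq, IsometryEquiv.apply_inv_self]
  · rw [inducedDist_of_notMem hg, inducedDist_of_notMem (by simpa using hg)]

theorem inducedDist_nonneg (hD : 0 ≤ D) (x y : X) (g : Γ) : 0 ≤ inducedDist Λ π D x y g := by
  unfold inducedDist
  split_ifs
  exacts [dist_nonneg, hD]

theorem inducedDist_le (hD : ∀ x y : X, dist x y ≤ 2 * D) (x y : X) (g : Γ) :
    inducedDist Λ π D x y g ≤ 2 * D := by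
  unfold inducedDist
  split_ifs
  exacts [hD _ _, by linarith [show 0 ≤ D by simpa using hD x x]]

theorem inducedDist_mul_le (hD : ∀ x y : X, dist x y ≤ 2 * D) (x y z : X) (g h : Γ) :
    inducedDist Λ π D x z (g * h) ≤ inducedDist Λ π D y z g + inducedDist Λ π D x y h := by
  have hD0 : 0 ≤ D := by simpa using hD x x
  by_cases hg : g ∈ Λ <;> by_cases hh : h ∈ Λ
  · lift g to Λ using hg
    lift h to Λ using hh
    rw [← Subgroup.coe_mul, inducedDist_coe, inducedDist_coe, inducedDist_coe, map_mul,
      IsometryEquiv.mul_apply, ← (π g).dist_eq (π h x) y]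
    exact (dist_triangle _ _ _).trans_eq (add_comm _ _)
  · rw [inducedDist_of_notMem hh, inducedDist_of_notMem (mt (Λ.mul_mem_cancel_left hg).1 hh)]
    linarith [inducedDist_nonneg (Λ := Λ) (π := π) hD0 y z g]
  · rw [inducedDist_of_notMem hg, inducedDist_of_notMem (mt (Λ.mul_mem_cancel_right hh).1 hg)]
    linarith [inducedDist_nonneg (Λ := Λ) (π := π) hD0 x y h]
  · rw [inducedDist_of_notMem hg, inducedDist_of_notMem hh]
    exact (inducedDist_le hD x z _).trans_eq (two_mul D)

theorem inducedDist_mem {Δ : Set ℝ} (hX : IsDeltaMetric Δ X) (hD : D ∈ Δ) {x y : X} {g : Γ}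
    (h : inducedDist Λ π D x y g ≠ 0) : inducedDist Λ π D x y g ∈ Δ := by
  unfold inducedDist at h ⊢
  split_ifs at h ⊢
  exacts [hX _ _ (dist_ne_zero.1 h), hD]

end InducedDist

section

variable {X Γ : Type*} [MetricSpace X] [Group Γ]

structure InducedSpace (Λ : Subgroup Γ) (π : Λ →* (X ≃ᵢ X)) (D : ℝ) where
  x : X
  g : Γ

namespace InducedSpace

variable {Λ : Subgroup Γ} {π : Λ →* (X ≃ᵢ X)} {D : ℝ}

def equivProd : InducedSpace Λ π D ≃ X × Γ where
  toFun p := (p.x, p.g)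
  invFun q := ⟨q.1, q.2⟩

instance [Finite X] [Finite Γ] : Finite (InducedSpace Λ π D) :=
  Finite.of_equiv _ equivProd.symm

instance : MulAction Γ (InducedSpace Λ π D) where
  smul h p := ⟨p.x, h * p.g⟩
  one_smul p := by simp [HSMul.hSMul]
  mul_smul h h' p := by simp [HSMul.hSMul, mul_assoc]

theorem smul_def (h : Γ) (p : InducedSpace Λ π D) : h • p = ⟨p.x, h * p.g⟩ := rfl

variable [Fact (∀ x y : X, dist x y ≤ 2 * D)]

noncomputable instance : PseudoMetricSpace (InducedSpace Λ π D) where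
  dist p q := inducedDist Λ π D p.x q.x (q.g⁻¹ * p.g)
  dist_self p := by simp [inducedDist_one]
  dist_comm p q := by rw [← inducedDist_inv, mul_inv_rev, inv_inv]
  dist_triangle p q r := by
    rw [show r.g⁻¹ * p.g = (r.g⁻¹ * q.g) * (q.g⁻¹ * p.g) by group, add_comm]
    exact inducedDist_mul_le Fact.out _ _ _ _ _

theorem dist_def (p q : InducedSpace Λ π D) :
    dist p q = inducedDist Λ π D p.x q.x (q.g⁻¹ * p.g) := rfl

instance : IsIsometricSMul Γ (InducedSpace Λ π D) where
  isometry_smul h := Isometry.of_dist_eq fun p q => by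
    simp only [smul_def, dist_def, mul_inv_rev, mul_assoc, inv_mul_cancel_left]

theorem dist_smul_mk_one (h : Γ) (x y : X) :
    dist (h • (⟨x, 1⟩ : InducedSpace Λ π D)) ⟨y, 1⟩ = inducedDist Λ π D x y h := by
  simp [smul_def, dist_def]

theorem isometry_mk_one : Isometry (fun x : X => (⟨x, 1⟩ : InducedSpace Λ π D)) :=
  Isometry.of_dist_eq fun x y => by simp [dist_def, inducedDist_one]

theorem inseparable_coe_smul_mk_one (l : Λ) (x : X) :
    Inseparable ((l : Γ) • (⟨x, 1⟩ : InducedSpace Λ π D)) ⟨π l x, 1⟩ := by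
  rw [Metric.inseparable_iff, dist_smul_mk_one, inducedDist_coe, dist_self]

open SeparationQuotient in
theorem faithfulSMul [Nonempty X] (hD : D ≠ 0) (hπ : Function.Injective π) :
    FaithfulSMul Γ (SeparationQuotient (InducedSpace Λ π D)) := by
  refine faithfulSMul_iff.2 fun h hfix => ?_
  have hfixX (x : X) : inducedDist Λ π D x x h = 0 := by
    rw [← dist_smul_mk_one, ← Metric.inseparable_iff, ← mk_eq_mk, mk_smul, hfix]
  have hΛ : h ∈ Λ := by
    by_contra hΛ
    exact hD (by simpa [inducedDist_of_notMem hΛ] using hfixX (Classical.arbitrary X))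
  lift h to Λ using hΛ
  have : π h = 1 := IsometryEquiv.ext fun x => by simpa [inducedDist_coe] using hfixX x
  simpa using hπ (this.trans (map_one π).symm)

open SeparationQuotient in
theorem isDeltaMetric {Δ : Set ℝ} (hX : IsDeltaMetric Δ X) (hD : D ∈ Δ) :
    IsDeltaMetric Δ (SeparationQuotient (InducedSpace Λ π D)) :=
  surjective_mk.forall₂.2 fun p q hpq => by
    rw [dist_mk, dist_def]
    exact inducedDist_mem hX hD (by simpa [mk_eq_mk, Metric.inseparable_iff, dist_def] using hpq)

end InducedSpace

end

theorem DistanceValueSet.exists_mem_forall_dist_le {Δ : Set ℝ} (hΔ : DistanceValueSet Δ)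
    {X : Type*} [MetricSpace X] [Finite X] [Nonempty X] (hX : IsDeltaMetric Δ X) :
    ∃ D ∈ Δ, ∀ x y : X, dist x y ≤ D := by
  obtain ⟨⟨a, b⟩, hmax⟩ := Finite.exists_max fun p : X × X => dist p.1 p.2
  by_cases hab : a = b
  · obtain ⟨D, hD⟩ := hΔ.nonempty
    exact ⟨D, hD, fun x y => (hmax (x, y)).trans (by simp [hab, (hΔ.pos D hD).le])⟩
  · exact ⟨dist a b, hX a b hab, fun x y => hmax (x, y)⟩

theorem exists_isometric_extension {Δ : Set ℝ} {X Γ : Type} [MetricSpace X] [Nonempty X]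
    [Finite X] [Group Γ] [Finite Γ] {Λ : Subgroup Γ} {π : Λ →* (X ≃ᵢ X)}
    (hX : IsDeltaMetric Δ X) (hπ : Function.Injective π) {D : ℝ} (hDΔ : D ∈ Δ) (hD0 : D ≠ 0)
    (hD : ∀ x y : X, dist x y ≤ 2 * D) :
    ∃ (Y : Type) (_ : MetricSpace Y) (j : X → Y) (π' : Γ →* (Y ≃ᵢ Y)),
      Finite Y ∧ IsDeltaMetric Δ Y ∧ Isometry j ∧ Function.Injective π' ∧
      ∀ (γ : Λ) (x : X), π' (γ : Γ) (j x) = j (π γ x) := by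
  have : Fact (∀ x y : X, dist x y ≤ 2 * D) := ⟨hD⟩
  have := InducedSpace.faithfulSMul hD0 hπ
  refine ⟨SeparationQuotient (InducedSpace Λ π D), inferInstance,
    fun x => .mk ⟨x, 1⟩, IsometryEquiv.constSMulHom _ _,
    Finite.of_surjective _ SeparationQuotient.surjective_mk,
    InducedSpace.isDeltaMetric hX hDΔ,
    SeparationQuotient.isometry_mk.comp InducedSpace.isometry_mk_one,
    IsometryEquiv.constSMulHom_injective _ _, fun l x => ?_⟩
  simp [← SeparationQuotient.mk_smul,
    SeparationQuotient.mk_eq_mk.2 (InducedSpace.inseparable_coe_smul_mk_one l x)]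

/-- Extension of a faithful isometric action of a finite subgroup Λ ≤ Γ on a finite
Δ-metric space X to a faithful isometric action of Γ on a finite Δ-metric space Y ⊇ X. -/
theorem stmt_2 (Δ : Set ℝ) (hΔ : DistanceValueSet Δ)
    (X : Type) [MetricSpace X] [Finite X] (hX : IsDeltaMetric Δ X)
    (Γ : Type) [Group Γ] [Finite Γ] (Λ : Subgroup Γ)
    (π : Λ →* (X ≃ᵢ X)) (hπ : Function.Injective π) :
    ∃ (Y : Type) (_ : MetricSpace Y) (j : X → Y) (π' : Γ →* (Y ≃ᵢ Y)),
      Finite Y ∧ IsDeltaMetric Δ Y ∧ Isometry j ∧ Function.Injective π' ∧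
      ∀ (γ : Λ) (x : X), π' (γ : Γ) (j x) = j (π γ x) := by
  rcases isEmpty_or_nonempty X with hX₀ | hX₀
  · obtain ⟨D, hD⟩ := hΔ.nonempty
    obtain ⟨Y, _, -, π', hY, hΔY, -, hπ', -⟩ :=
      exists_isometric_extension (X := PUnit) (Λ := (⊥ : Subgroup Γ)) (π := 1)
        (fun x y h => (h (Subsingleton.elim x y)).elim) (Function.injective_of_subsingleton _)
        hD (hΔ.pos D hD).ne' fun x y => by simp [(hΔ.pos D hD).le]
    exact ⟨Y, _, isEmptyElim, π', hY, hΔY, fun x => isEmptyElim x, hπ', fun _ x => isEmptyElim x⟩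
  · obtain ⟨D, hDΔ, hD⟩ := hΔ.exists_mem_forall_dist_le hX
    have hD0 := hΔ.pos D hDΔ
    exact exists_isometric_extension hX hπ hDΔ hD0.ne' fun x y => by linarith [hD x y]
end

section
/- Let G be a group and H ≤ G a normal subgroup of finite index, and let Σ be a left system of equations on finitely generated subgroups H₁,…,Hₙ ≤ H with all constants in H. If Σ has a solution in G, then Σ has a solution in H. -/
/-- An equation of a left system on subgroups `H₁,…,Hₙ` (indexed by `Fin n`), with
variables `x₁,…,xₘ` (indexed by `Fin m`): either `x_i H_j = g H_j` or
`x_i H_j = x_r g H_j`. -/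
inductive LeftEq (G : Type) [Group G] (m n : ℕ) where
  | const (i : Fin m) (j : Fin n) (g : G) : LeftEq G m n
  | var (i r : Fin m) (j : Fin n) (g : G) : LeftEq G m n

/-- The constant appearing in an equation. -/
def LeftEq.constant {G : Type} [Group G] {m n : ℕ} : LeftEq G m n → G
  | .const _ _ g => g
  | .var _ _ _ g => g

/-- An assignment `v` of group elements to the variables satisfies an equation
(equality of left cosets `xH = yH` being `x⁻¹ y ∈ H`). -/
def LeftEq.Sat {G : Type} [Group G] {m n : ℕ} (Hs : Fin n → Subgroup G)
    (v : Fin m → G) : LeftEq G m n → Prop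
  | .const i j g => (v i)⁻¹ * g ∈ Hs j
  | .var i r j g => (v i)⁻¹ * (v r * g) ∈ Hs j

/-! If `Hⱼ ≤ H` and every constant lies in `H`, an equation `x_i Hⱼ = g Hⱼ` forces
`x_i ∈ H`, and an equation `x_i Hⱼ = x_r g Hⱼ` forces `x_i H = x_r H`. So left-multiplying
each value of a solution by an element that depends only on its left `H`-coset, and is `1`
on `H` itself, still gives a solution; choosing that element to bring the value into `H`
yields a solution in `H`. -/

namespace LeftEq

variable {G : Type} [Group G] {m n : ℕ} {Hs : Fin n → Subgroup G} {H : Subgroup G}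

theorem Sat.coset_mul_left (hle : ∀ j, Hs j ≤ H) (c : G ⧸ H → G)
    (hc : c ((1 : G) : G ⧸ H) = 1) {v : Fin m → G} {e : LeftEq G m n}
    (he : e.constant ∈ H) (hv : e.Sat Hs v) :
    e.Sat Hs (fun i => c (v i) * v i) := by
  cases e with
  | const i j g =>
    simp only [constant, Sat] at he hv ⊢
    have hvi : ((v i : G) : G ⧸ H) = ((1 : G) : G ⧸ H) :=
      (QuotientGroup.eq.2 (hle j hv)).trans (QuotientGroup.eq.2 (by simpa using he))
    simpa [hvi, hc] using hv
  | var i r j g =>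
    simp only [constant, Sat] at he hv ⊢
    have hvi : ((v i : G) : G ⧸ H) = (v r : G ⧸ H) :=
      (QuotientGroup.eq.2 (hle j hv)).trans
        (QuotientGroup.eq.2 (by simpa using H.inv_mem he))
    rw [hvi]
    simpa [mul_assoc] using hv

end LeftEq

theorem Subgroup.exists_coset_mul_mem {G : Type} [Group G] (H : Subgroup G) :
    ∃ c : G ⧸ H → G, c ((1 : G) : G ⧸ H) = 1 ∧ ∀ x : G, c x * x ∈ H := by
  classical
  refine ⟨fun q => if q = ((1 : G) : G ⧸ H) then 1 else q.out⁻¹, if_pos rfl, fun x => ?_⟩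
  beta_reduce
  split_ifs with hx
  · simpa using (QuotientGroup.eq.1 hx.symm)
  · exact QuotientGroup.eq.1 (QuotientGroup.out_eq' (x : G ⧸ H))

theorem stmt_3_general (G : Type) [Group G] (H : Subgroup G)
    (m n : ℕ) (Hs : Fin n → Subgroup G)
    (hle : ∀ j, Hs j ≤ H)
    (S : Finset (LeftEq G m n)) (hconst : ∀ e ∈ S, e.constant ∈ H)
    (hsol : ∃ v : Fin m → G, ∀ e ∈ S, LeftEq.Sat Hs v e) :
    ∃ v : Fin m → G, (∀ i, v i ∈ H) ∧ ∀ e ∈ S, LeftEq.Sat Hs v e := by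
  obtain ⟨v, hv⟩ := hsol
  obtain ⟨c, hc1, hcH⟩ := H.exists_coset_mul_mem
  exact ⟨fun i => c (v i) * v i, fun i => hcH (v i),
    fun e he => (hv e he).coset_mul_left hle c hc1 (hconst e he)⟩

/-- If `H ⊴ G` has finite index, `Σ` is a left system of equations on finitely
generated subgroups `H₁,…,Hₙ ≤ H` whose constants all lie in `H`, and `Σ` has a
solution in `G`, then `Σ` has a solution consisting of elements of `H`. -/
theorem stmt_3 (G : Type) [Group G] (H : Subgroup G) [H.Normal]
    (hindex : H.index ≠ 0)
    (m n : ℕ) (Hs : Fin n → Subgroup G)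
    (hle : ∀ j, Hs j ≤ H) (hfg : ∀ j, (Hs j).FG)
    (S : Finset (LeftEq G m n)) (hconst : ∀ e ∈ S, e.constant ∈ H)
    (hsol : ∃ v : Fin m → G, ∀ e ∈ S, LeftEq.Sat Hs v e) :
    ∃ v : Fin m → G, (∀ i, v i ∈ H) ∧ ∀ e ∈ S, LeftEq.Sat Hs v e :=
  stmt_3_general G H m n Hs hle S hconst hsol
end

section
/- Let ℒ be a relational language, Γ a group, Λ ≤ Γ a subgroup, M ⊆ N ℒ-structures with M a substructure of N, and suppose Λ acts on N by automorphisms and Γ acts on M by automorphisms, compatibly (the Λ-action on M induced from N agrees with the restriction of the Γ-action). Then there exists an ℒ-structure P containing N as a substructure and an action of Γ on P by automorphisms extending the Λ-action on N. Moreover, if Γ and N are finite, then P can be taken to be finite. -/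
open FirstOrder

/-- `IsAction σ` says that `σ` is an action of the group `Γ` by `L`-automorphisms. -/
def IsLAction {L : Language} {Γ : Type} [Group Γ] {P : Type} [L.Structure P]
    (σ : Γ → (P ≃[L] P)) : Prop :=
  σ 1 = Language.Equiv.refl L P ∧ ∀ g h : Γ, σ (g * h) = (σ g).comp (σ h)

section Aux

set_option linter.unusedSectionVars false

variable {L : Language} [L.IsRelational]
    {N : Type} [L.Structure N]
    {Γ : Type} [Group Γ] {Λ : Subgroup Γ}
    (ρ : Λ → (N ≃[L] N))

/-- The setoid on `Γ × N` identifying `(g, a)` with `(g * l, ρ l⁻¹ a)`. -/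
def extSetoid (hρ : IsLAction ρ) : Setoid (Γ × N) where
  r p q := ∃ l : Λ, q.1 = p.1 * l ∧ q.2 = ρ l⁻¹ p.2
  iseqv := by
    obtain ⟨h1, hm⟩ := hρ
    constructor
    · intro p
      exact ⟨1, by simp [h1]⟩
    · rintro p q ⟨l, hg, ha⟩
      refine ⟨l⁻¹, by simp [hg, mul_assoc], ?_⟩
      have : ρ (l⁻¹)⁻¹ q.2 = ρ l (ρ l⁻¹ p.2) := by rw [ha, inv_inv]
      rw [this, ← Language.Equiv.comp_apply, ← hm, mul_inv_cancel, h1]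
      rfl
    · rintro p q r ⟨l, hg, ha⟩ ⟨m, hg', ha'⟩
      refine ⟨l * m, by simp [hg', hg, mul_assoc], ?_⟩
      rw [ha', ha, mul_inv_rev, hm]
      rfl

variable (hρ : IsLAction ρ)

/-- The carrier of the induced structure. -/
abbrev ExtSpace : Type := Quotient (extSetoid ρ hρ)

/-- The canonical map to the quotient. -/
abbrev mkE : Γ × N → ExtSpace ρ hρ := Quotient.mk (extSetoid ρ hρ)

/-- The structure on the quotient. -/
instance extStructure : L.Structure (ExtSpace ρ hρ) where
  funMap f _ := isEmptyElim f
  RelMap {n} R x := ∃ (g : Γ) (b : Fin n → N),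
    (∀ i, x i = mkE ρ hρ (g, b i)) ∧ Language.Structure.RelMap R b

lemma ext_rel_mk {n : ℕ} (R : L.Relations n) (g : Γ) (b : Fin n → N) :
    Language.Structure.RelMap R (fun i => mkE ρ hρ (g, b i)) ↔
      Language.Structure.RelMap R b := by
  constructor
  · rintro ⟨g', b', hx, hR⟩
    rcases isEmpty_or_nonempty (Fin n) with he | hne
    · have : b = b' := funext fun i => isEmptyElim i
      rwa [this]
    · obtain ⟨i0⟩ := hne
      obtain ⟨l, hl1, _⟩ := Quotient.exact (hx i0)
      have hb : ∀ i, b' i = ρ l⁻¹ (b i) := by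
        intro i
        obtain ⟨m, hm1, hm2⟩ := Quotient.exact (hx i)
        have hml : m = l := Subtype.ext (mul_left_cancel (hm1.symm.trans hl1))
        exact hm2.trans (by rw [hml])
      have hb' : b' = ⇑(ρ l⁻¹) ∘ b := funext hb
      rw [hb'] at hR
      exact ((ρ l⁻¹).map_rel' R b).mp hR
  · intro hR
    exact ⟨g, b, fun _ => rfl, hR⟩

/-- Left multiplication by `g` on the quotient. -/
def extMul (g : Γ) : ExtSpace ρ hρ → ExtSpace ρ hρ :=
  Quotient.map (fun p => (g * p.1, p.2)) (by
    rintro p q ⟨l, h1, h2⟩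
    exact ⟨l, by simp [h1, mul_assoc], h2⟩)

lemma extMul_mk (g h : Γ) (a : N) :
    extMul ρ hρ g (mkE ρ hρ (h, a)) = mkE ρ hρ (g * h, a) := rfl

lemma extMul_extMul (g g' : Γ) (x : ExtSpace ρ hρ) :
    extMul ρ hρ g (extMul ρ hρ g' x) = extMul ρ hρ (g * g') x := by
  induction x using Quotient.ind with
  | _ p =>
    obtain ⟨h, a⟩ := p
    rw [show (⟦(h, a)⟧ : ExtSpace ρ hρ) = mkE ρ hρ (h, a) from rfl,
      extMul_mk, extMul_mk, extMul_mk, mul_assoc]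

lemma extMul_one (x : ExtSpace ρ hρ) : extMul ρ hρ 1 x = x := by
  induction x using Quotient.ind with
  | _ p =>
    obtain ⟨h, a⟩ := p
    rw [show (⟦(h, a)⟧ : ExtSpace ρ hρ) = mkE ρ hρ (h, a) from rfl, extMul_mk, one_mul]

lemma extMul_rel (g : Γ) {n : ℕ} (R : L.Relations n) (x : Fin n → ExtSpace ρ hρ) :
    Language.Structure.RelMap R x → Language.Structure.RelMap R (extMul ρ hρ g ∘ x) := by
  rintro ⟨h, b, hx, hR⟩
  refine ⟨g * h, b, fun i => ?_, hR⟩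
  simp only [Function.comp_apply, hx i, extMul_mk]

/-- The automorphism of the quotient given by `g`. -/
def extEquiv (g : Γ) : (ExtSpace ρ hρ) ≃[L] (ExtSpace ρ hρ) where
  toFun := extMul ρ hρ g
  invFun := extMul ρ hρ g⁻¹
  left_inv x := by rw [extMul_extMul, inv_mul_cancel, extMul_one]
  right_inv x := by rw [extMul_extMul, mul_inv_cancel, extMul_one]
  map_fun' f _ := isEmptyElim f
  map_rel' R x := by
    constructor
    · intro h
      have h2 := extMul_rel ρ hρ g⁻¹ R _ h
      have hx : extMul ρ hρ g⁻¹ ∘ (extMul ρ hρ g ∘ x) = x := by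
        funext i
        simp only [Function.comp_apply, extMul_extMul, inv_mul_cancel, extMul_one]
      rwa [hx] at h2
    · exact extMul_rel ρ hρ g R x

lemma extEquiv_apply (g : Γ) (x : ExtSpace ρ hρ) :
    extEquiv ρ hρ g x = extMul ρ hρ g x := rfl

end Aux

/-- Extension of compatible actions by automorphisms on relational structures:
given a subgroup Λ ≤ Γ, a substructure M ⊆ N, an action of Λ on N and an action of Γ
on M by automorphisms which are compatible, there is a structure P ⊇ N with a
Γ-action extending the Λ-action on N; moreover P can be taken finite if Γ and N are. -/
theorem stmt_4 (L : Language) [L.IsRelational]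
    (N : Type) [L.Structure N] (M : L.Substructure N)
    (Γ : Type) [Group Γ] (Λ : Subgroup Γ)
    (ρ : Λ → (N ≃[L] N)) (hρ : IsLAction ρ)
    (π : Γ → (M ≃[L] M)) (hπ : IsLAction π)
    (hcompat : ∀ (l : Λ) (x : M), ρ l (x : N) = (π (l : Γ) x : N)) :
    ∃ (P : Type) (_ : L.Structure P) (j : N ↪[L] P) (σ : Γ → (P ≃[L] P)),
      IsLAction σ ∧
      (∀ (l : Λ) (a : N), σ (l : Γ) (j a) = j (ρ l a)) ∧
      (Finite Γ → Finite N → Finite P) := by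
  obtain ⟨h1, hm⟩ := id hρ
  refine ⟨ExtSpace ρ hρ, extStructure ρ hρ, ?_, extEquiv ρ hρ, ?_, ?_, ?_⟩
  · -- the embedding
    refine ⟨⟨fun a => mkE ρ hρ (1, a), ?_⟩, ?_, ?_⟩
    · intro a b hab
      obtain ⟨l, hl1, hl2⟩ := Quotient.exact hab
      have hl : l = 1 := Subtype.ext (by simpa using hl1.symm)
      rw [hl, inv_one, h1] at hl2
      exact hl2.symm
    · intro n f x; exact isEmptyElim f
    · intro n R x
      exact ext_rel_mk ρ hρ R 1 x
  · -- IsLAction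
    constructor
    · apply Language.Equiv.ext
      intro x
      rw [extEquiv_apply, extMul_one]
      rfl
    · intro g h
      apply Language.Equiv.ext
      intro x
      rw [Language.Equiv.comp_apply, extEquiv_apply, extEquiv_apply, extEquiv_apply,
        extMul_extMul]
  · -- extends ρ
    intro l a
    show extMul ρ hρ (l : Γ) (mkE ρ hρ (1, a)) = mkE ρ hρ (1, ρ l a)
    rw [extMul_mk, mul_one]
    exact Quotient.sound ⟨l⁻¹, by simp, by rw [inv_inv]⟩
  · -- finiteness
    intro hΓ hN
    exact Quotient.finite _
end

section
/- Let G be a countable locally finite group satisfying property (E): for every pair of finite groups G₁ ≤ G₂ and every group embedding Ψ₁ : G₁ → G, there exists a group embedding Ψ₂ : G₂ → G with Ψ₂ restricted to G₁ equal to Ψ₁. Then any two countable locally finite groups with property (E) are isomorphic. -/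
/-- A group is locally finite if every finitely generated subgroup is finite. -/
def LocallyFiniteGrp (G : Type*) [Group G] : Prop :=
  ∀ s : Set G, s.Finite → (Subgroup.closure s : Set G).Finite

/-- Property (E): every embedding of a finite group `G₁` into `G` extends along any
embedding of `G₁` into a finite group `G₂` to an embedding of `G₂` into `G`. -/
def PropertyE (G : Type*) [Group G] : Prop :=
  ∀ (G₁ G₂ : Type) [Group G₁] [Group G₂] [Finite G₁] [Finite G₂]
    (ι : G₁ →* G₂), Function.Injective ι →
    ∀ (Ψ₁ : G₁ →* G), Function.Injective Ψ₁ →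
    ∃ Ψ₂ : G₂ →* G, Function.Injective Ψ₂ ∧ ∀ x, Ψ₂ (ι x) = Ψ₁ x

section Aux

variable {G H : Type} [Group G] [Group H]

/-- A partial isomorphism: a finite subgroup of `G` with an injective hom to `H`. -/
structure AuxPI (G H : Type) [Group G] [Group H] where
  A : Subgroup G
  fin : (A : Set G).Finite
  ψ : A →* H
  inj : Function.Injective ψ

/-- `T` extends `S`. -/
def AuxExt (S T : AuxPI G H) : Prop :=
  S.A ≤ T.A ∧ ∀ (a : G) (ha : a ∈ S.A) (ha' : a ∈ T.A), T.ψ ⟨a, ha'⟩ = S.ψ ⟨a, ha⟩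

lemma AuxExt.rfl (S : AuxPI G H) : AuxExt S S := ⟨le_rfl, fun _ _ _ => _root_.rfl⟩

lemma AuxExt.trans {S T U : AuxPI G H} (h1 : AuxExt S T) (h2 : AuxExt T U) : AuxExt S U :=
  ⟨h1.1.trans h2.1, fun a ha ha' => (h2.2 a (h1.1 ha) ha').trans (h1.2 a ha _)⟩

lemma fwd_step (hGlf : LocallyFiniteGrp G) (hHE : PropertyE H) (S : AuxPI G H) (g : G) :
    ∃ T : AuxPI G H, AuxExt S T ∧ g ∈ T.A := by
  set A' := Subgroup.closure ((S.A : Set G) ∪ {g}) with hA'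
  have hfin : (A' : Set G).Finite := hGlf _ (S.fin.union (Set.finite_singleton g))
  have hle : S.A ≤ A' := fun x hx => Subgroup.subset_closure (Or.inl hx)
  have h1 : Finite ↥S.A := S.fin.to_subtype
  have h2 : Finite ↥A' := hfin.to_subtype
  obtain ⟨Ψ₂, hinj, hext⟩ := hHE ↥S.A ↥A' (Subgroup.inclusion hle)
    (Subgroup.inclusion_injective hle) S.ψ S.inj
  refine ⟨⟨A', hfin, Ψ₂, hinj⟩, ⟨hle, ?_⟩, Subgroup.subset_closure (Or.inr rfl)⟩
  intro a ha ha'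
  simpa [Subgroup.inclusion] using hext ⟨a, ha⟩

lemma bwd_step (hHlf : LocallyFiniteGrp H) (hGE : PropertyE G) (S : AuxPI G H) (h : H) :
    ∃ T : AuxPI G H, AuxExt S T ∧ h ∈ Set.range ⇑T.ψ := by
  have hAfin : Finite ↥S.A := S.fin.to_subtype
  set B := S.ψ.range with hB
  have hBfin : (B : Set H).Finite := by
    rw [hB, MonoidHom.coe_range]; exact Set.finite_range _
  set B' := Subgroup.closure ((B : Set H) ∪ {h}) with hB'
  have hfinB' : (B' : Set H).Finite := hHlf _ (hBfin.union (Set.finite_singleton h))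
  have hle : B ≤ B' := fun x hx => Subgroup.subset_closure (Or.inl hx)
  have h1 : Finite ↥B := hBfin.to_subtype
  have h2 : Finite ↥B' := hfinB'.to_subtype
  let e : ↥S.A ≃* ↥B := MonoidHom.ofInjective S.inj
  let Φ : ↥B →* G := S.A.subtype.comp e.symm.toMonoidHom
  have hΦinj : Function.Injective Φ := Subtype.coe_injective.comp e.symm.injective
  obtain ⟨θ, hθinj, hθext⟩ := hGE ↥B ↥B' (Subgroup.inclusion hle)
    (Subgroup.inclusion_injective hle) Φ hΦinj
  set A' := θ.range with hA'
  have hA'fin : (A' : Set G).Finite := by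
    rw [hA', MonoidHom.coe_range]; exact Set.finite_range _
  let e' : ↥B' ≃* ↥A' := MonoidHom.ofInjective hθinj
  let ψ' : ↥A' →* H := B'.subtype.comp e'.symm.toMonoidHom
  have hψ'inj : Function.Injective ψ' := Subtype.coe_injective.comp e'.symm.injective
  -- key computation
  have key : ∀ x : ↥S.A, θ (Subgroup.inclusion hle (e x)) = (x : G) := by
    intro x
    rw [hθext (e x)]
    show (e.symm (e x) : G) = (x : G)
    rw [MulEquiv.symm_apply_apply]
  have hle2 : S.A ≤ A' := by
    intro a ha
    exact ⟨Subgroup.inclusion hle (e ⟨a, ha⟩), key ⟨a, ha⟩⟩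
  have hcoe : ∀ y : ↥B', ((e' y : ↥A') : G) = θ y := fun y => rfl
  refine ⟨⟨A', hA'fin, ψ', hψ'inj⟩, ⟨hle2, ?_⟩, ?_⟩
  · intro a ha ha'
    set x : ↥S.A := ⟨a, ha⟩ with hx
    have hsymm : e'.symm ⟨a, ha'⟩ = Subgroup.inclusion hle (e x) := by
      apply e'.injective
      rw [MulEquiv.apply_symm_apply]
      apply Subtype.ext
      rw [hcoe]
      exact (key x).symm
    show (B'.subtype (e'.symm ⟨a, ha'⟩)) = S.ψ x
    rw [hsymm]
    show ((Subgroup.inclusion hle (e x) : ↥B') : H) = S.ψ x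
    rw [Subgroup.coe_inclusion]
    rfl
  · have hh : h ∈ B' := Subgroup.subset_closure (Or.inr rfl)
    refine ⟨e' ⟨h, hh⟩, ?_⟩
    show B'.subtype (e'.symm (e' ⟨h, hh⟩)) = h
    rw [MulEquiv.symm_apply_apply]
    rfl

end Aux

/-- Any two countable locally finite groups with property (E) are isomorphic. -/
theorem stmt_5 (G H : Type) [Group G] [Group H] [Countable G] [Countable H]
    (hGlf : LocallyFiniteGrp G) (hHlf : LocallyFiniteGrp H)
    (hGE : PropertyE G) (hHE : PropertyE H) :
    Nonempty (G ≃* H) := by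
  classical
  have : Nonempty G := ⟨1⟩
  have : Nonempty H := ⟨1⟩
  obtain ⟨eg, heg⟩ := exists_surjective_nat G
  obtain ⟨eh, heh⟩ := exists_surjective_nat H
  -- combined step
  have step : ∀ (S : AuxPI G H) (g : G) (h : H),
      ∃ T : AuxPI G H, AuxExt S T ∧ g ∈ T.A ∧ h ∈ Set.range ⇑T.ψ := by
    intro S g h
    obtain ⟨T1, he1, hg1⟩ := fwd_step hGlf hHE S g
    obtain ⟨T2, he2, hh2⟩ := bwd_step hHlf hGE T1 h
    exact ⟨T2, he1.trans he2, he2.1 hg1, hh2⟩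
  -- base partial iso
  have base_inj : Function.Injective (1 : (⊥ : Subgroup G) →* H) := by
    intro x y _
    exact Subsingleton.elim x y
  let S0 : AuxPI G H := ⟨⊥, Set.finite_singleton 1 |>.subset (by simp), 1, base_inj⟩
  -- the sequence
  let S : ℕ → AuxPI G H := fun n => Nat.rec S0
    (fun n Sn => Classical.choose (step Sn (eg n) (eh n))) n
  have hSstep : ∀ n, AuxExt (S n) (S (n + 1)) ∧ eg n ∈ (S (n + 1)).A ∧
      eh n ∈ Set.range ⇑(S (n + 1)).ψ := fun n =>
    Classical.choose_spec (step (S n) (eg n) (eh n))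
  have hchain : ∀ m n, m ≤ n → AuxExt (S m) (S n) := by
    intro m n hmn
    induction n with
    | zero => simp at hmn; subst hmn; exact AuxExt.rfl _
    | succ k ih =>
      rcases Nat.lt_or_ge m (k + 1) with hlt | hge
      · exact (ih (Nat.lt_succ_iff.mp hlt)).trans (hSstep k).1
      · have : m = k + 1 := le_antisymm hmn hge
        subst this; exact AuxExt.rfl _
  -- every g lies in some S n
  have hmem : ∀ g : G, ∃ n, g ∈ (S n).A := by
    intro g
    obtain ⟨n, rfl⟩ := heg g
    exact ⟨n + 1, (hSstep n).2.1⟩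
  -- value independent of stage
  let F : G → H := fun g => (S (Nat.find (hmem g))).ψ ⟨g, Nat.find_spec (hmem g)⟩
  have hF : ∀ (g : G) (k : ℕ) (hk : g ∈ (S k).A), F g = (S k).ψ ⟨g, hk⟩ := by
    intro g k hk
    have hm : Nat.find (hmem g) ≤ k := Nat.find_min' (hmem g) hk
    exact ((hchain _ _ hm).2 g (Nat.find_spec (hmem g)) hk).symm
  have hFmul : ∀ g g' : G, F (g * g') = F g * F g' := by
    intro g g'
    obtain ⟨m, hm⟩ := hmem g
    obtain ⟨n, hn⟩ := hmem g'
    have hm' : g ∈ (S (max m n)).A := (hchain m _ (le_max_left m n)).1 hm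
    have hn' : g' ∈ (S (max m n)).A := (hchain n _ (le_max_right m n)).1 hn
    have hmul : g * g' ∈ (S (max m n)).A := mul_mem hm' hn'
    rw [hF g _ hm', hF g' _ hn', hF (g * g') _ hmul]
    rw [show (⟨g * g', hmul⟩ : ↥(S (max m n)).A) = ⟨g, hm'⟩ * ⟨g', hn'⟩ from rfl]
    exact map_mul _ _ _
  let Fhom : G →* H := MonoidHom.mk' F hFmul
  have hFinj : Function.Injective Fhom := by
    intro g g' hgg'
    obtain ⟨m, hm⟩ := hmem g
    obtain ⟨n, hn⟩ := hmem g'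
    have hm' : g ∈ (S (max m n)).A := (hchain m _ (le_max_left m n)).1 hm
    have hn' : g' ∈ (S (max m n)).A := (hchain n _ (le_max_right m n)).1 hn
    have : (S (max m n)).ψ ⟨g, hm'⟩ = (S (max m n)).ψ ⟨g', hn'⟩ := by
      rw [← hF g _ hm', ← hF g' _ hn']; exact hgg'
    have := (S (max m n)).inj this
    exact congrArg Subtype.val this
  have hFsurj : Function.Surjective Fhom := by
    intro h
    obtain ⟨n, rfl⟩ := heh h
    obtain ⟨a, ha⟩ := (hSstep n).2.2
    refine ⟨(a : G), ?_⟩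
    show F (a : G) = eh n
    rw [hF (a : G) (n + 1) a.2]
    rw [show (⟨(a : G), a.2⟩ : ↥(S (n + 1)).A) = a from rfl]
    exact ha
  exact ⟨MulEquiv.ofBijective Fhom ⟨hFinj, hFsurj⟩⟩
end

section
/- Let G be a countable locally finite group with property (E). Then every countable locally finite group embeds into G, and any two isomorphic finite subgroups of G are conjugate in G. -/
noncomputable def chainAux {G H : Type} [Group G] [Group H] (hGE : PropertyE G)
    (K : ℕ → Subgroup H) (hmono : ∀ n, K n ≤ K (n + 1)) (hfin : ∀ n, Finite (K n))
    (h0 : K 0 = ⊥) : ∀ n, {ψ : K n →* G // Function.Injective ψ}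
  | 0 => ⟨1, fun a b _ => by
      have ha : (a : H) = 1 := Subgroup.mem_bot.mp (h0 ▸ a.2)
      have hb : (b : H) = 1 := Subgroup.mem_bot.mp (h0 ▸ b.2)
      exact Subtype.ext (ha.trans hb.symm)⟩
  | n + 1 =>
    have _i1 : Finite (K n) := hfin n
    have _i2 : Finite (K (n + 1)) := hfin (n + 1)
    let prev := chainAux hGE K hmono hfin h0 n
    let e := hGE (K n) (K (n + 1)) (Subgroup.inclusion (hmono n))
      (Subgroup.inclusion_injective _) prev.1 prev.2
    ⟨e.choose, e.choose_spec.1⟩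

theorem chainAux_compat {G H : Type} [Group G] [Group H] (hGE : PropertyE G)
    (K : ℕ → Subgroup H) (hmono : ∀ n, K n ≤ K (n + 1)) (hfin : ∀ n, Finite (K n))
    (h0 : K 0 = ⊥) (n : ℕ) (x : K n) :
    (chainAux hGE K hmono hfin h0 (n + 1)).1 (Subgroup.inclusion (hmono n) x)
      = (chainAux hGE K hmono hfin h0 n).1 x := by
  have _i1 : Finite (K n) := hfin n
  have _i2 : Finite (K (n + 1)) := hfin (n + 1)
  exact (hGE (K n) (K (n + 1)) (Subgroup.inclusion (hmono n))
      (Subgroup.inclusion_injective _) (chainAux hGE K hmono hfin h0 n).1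
      (chainAux hGE K hmono hfin h0 n).2).choose_spec.2 x

theorem embeds_of_propertyE {G : Type} [Group G] (hGE : PropertyE G)
    (H : Type) [Group H] [Countable H] (hH : LocallyFiniteGrp H) :
    ∃ f : H →* G, Function.Injective f := by
  obtain ⟨f, hf⟩ := exists_surjective_nat H
  set K : ℕ → Subgroup H := fun n => Subgroup.closure (f '' Set.Iio n) with hKdef
  have hK : Monotone K := fun m n h =>
    Subgroup.closure_mono (Set.image_mono (Set.Iio_subset_Iio h))
  have hfin : ∀ n, Finite (K n) := fun n =>
    (hH _ ((Set.finite_Iio n).image f)).to_subtype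
  have h0 : K 0 = ⊥ := by simp [hKdef]
  set c := chainAux hGE K (fun n => hK (Nat.le_succ n)) hfin h0 with hcdef
  have compat : ∀ m n (h : m ≤ n) (x : H) (hx : x ∈ K m),
      (c n).1 ⟨x, hK h hx⟩ = (c m).1 ⟨x, hx⟩ := by
    intro m n h
    induction n, h using Nat.le_induction with
    | base => intro x hx; rfl
    | succ n h ih =>
      intro x hx
      have := chainAux_compat hGE K (fun n => hK (Nat.le_succ n)) hfin h0 n ⟨x, hK h hx⟩
      exact this.trans (ih x hx)
  set idx : H → ℕ := fun x => (hf x).choose with hidxdef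
  have hidx : ∀ x, f (idx x) = x := fun x => (hf x).choose_spec
  have mem' : ∀ x : H, x ∈ K (idx x + 1) := fun x =>
    Subgroup.subset_closure ⟨idx x, Nat.lt_succ_self _, hidx x⟩
  set Φ : H → G := fun x => (c (idx x + 1)).1 ⟨x, mem' x⟩ with hΦdef
  have key : ∀ (x : H) (N : ℕ) (hN : idx x + 1 ≤ N), Φ x = (c N).1 ⟨x, hK hN (mem' x)⟩ :=
    fun x N hN => (compat _ _ hN x (mem' x)).symm
  refine ⟨⟨⟨Φ, ?_⟩, ?_⟩, ?_⟩
  · show Φ 1 = 1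
    rw [hΦdef]
    exact map_one _
  · intro x y
    show Φ (x * y) = Φ x * Φ y
    set N := max (idx (x * y) + 1) (max (idx x + 1) (idx y + 1)) with hN
    rw [key (x*y) N (le_max_left _ _), key x N (le_trans (le_max_left _ _) (le_max_right _ _)),
      key y N (le_trans (le_max_right _ _) (le_max_right _ _))]
    rw [← map_mul]
    rfl
  · intro x y hxy
    replace hxy : Φ x = Φ y := hxy
    set N := max (idx x + 1) (idx y + 1) with hN
    rw [key x N (le_max_left _ _), key y N (le_max_right _ _)] at hxy
    have := (c N).2 hxy
    exact congrArg Subtype.val this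

section twist
variable {L : Type*} [Group L]

theorem out_inv_mul_mem (A : Subgroup L) (x : L) :
    ((QuotientGroup.mk x : L ⧸ A)).out⁻¹ * x ∈ A :=
  QuotientGroup.eq.mp (QuotientGroup.out_eq' (QuotientGroup.mk x))

/-- The bijection of `L` intertwining right translation by `A` and by `B` through `ψ`. -/
noncomputable def twist (A B : Subgroup L) (q : L ⧸ A ≃ L ⧸ B) (ψ : A ≃* B) (x : L) : L :=
  (q (QuotientGroup.mk x)).out *
    (ψ ⟨((QuotientGroup.mk x : L ⧸ A)).out⁻¹ * x, out_inv_mul_mem A x⟩ : L)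

theorem twist_mk (A B : Subgroup L) (q : L ⧸ A ≃ L ⧸ B) (ψ : A ≃* B) (x : L) :
    (QuotientGroup.mk (twist A B q ψ x) : L ⧸ B) = q (QuotientGroup.mk x) := by
  unfold twist
  rw [QuotientGroup.mk_mul_of_mem _ (ψ _).2, QuotientGroup.out_eq']

theorem twist_twist (A B : Subgroup L) (q : L ⧸ A ≃ L ⧸ B) (ψ : A ≃* B) (x : L) :
    twist B A q.symm ψ.symm (twist A B q ψ x) = x := by
  have h1 := twist_mk A B q ψ x
  have hval : (q (QuotientGroup.mk x)).out⁻¹ * twist A B q ψ x =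
      (ψ ⟨((QuotientGroup.mk x : L ⧸ A)).out⁻¹ * x, out_inv_mul_mem A x⟩ : L) := by
    rw [twist, inv_mul_cancel_left]
  conv_lhs => rw [twist]
  simp only [h1, Equiv.symm_apply_apply, hval]
  rw [show (⟨(ψ ⟨((QuotientGroup.mk x : L ⧸ A)).out⁻¹ * x, out_inv_mul_mem A x⟩ : L), by
        simp [SetLike.coe_mem]⟩ : B) = ψ ⟨((QuotientGroup.mk x : L ⧸ A)).out⁻¹ * x,
        out_inv_mul_mem A x⟩ from Subtype.ext rfl]
  rw [MulEquiv.symm_apply_apply]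
  exact mul_inv_cancel_left _ _

theorem twist_mul (A B : Subgroup L) (q : L ⧸ A ≃ L ⧸ B) (ψ : A ≃* B) (x : L) (k : A) :
    twist A B q ψ (x * k) = twist A B q ψ x * (ψ k : L) := by
  have h1 : (QuotientGroup.mk (x * k) : L ⧸ A) = QuotientGroup.mk x :=
    QuotientGroup.mk_mul_of_mem x k.2
  rw [twist, twist]
  simp only [h1]
  rw [mul_assoc]
  congr 1
  rw [show (⟨((QuotientGroup.mk x : L ⧸ A)).out⁻¹ * (x * k), h1 ▸ out_inv_mul_mem A (x * k)⟩ : A)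
      = ⟨((QuotientGroup.mk x : L ⧸ A)).out⁻¹ * x, out_inv_mul_mem A x⟩ * k from
    Subtype.ext (by simp [mul_assoc]), map_mul]
  rfl

end twist

theorem conj_of_iso {G : Type} [Group G] (hGlf : LocallyFiniteGrp G) (hGE : PropertyE G)
    (K₁ K₂ : Subgroup G) (h1 : Finite K₁) (h2 : Finite K₂) (e : K₁ ≃* K₂) :
    ∃ g : G, K₁.map (MulAut.conj g).toMonoidHom = K₂ := by
  set L : Subgroup G := Subgroup.closure ((K₁ : Set G) ∪ (K₂ : Set G)) with hLdef
  have hK1L : K₁ ≤ L := fun x hx => Subgroup.subset_closure (Or.inl hx)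
  have hK2L : K₂ ≤ L := fun x hx => Subgroup.subset_closure (Or.inr hx)
  have hU : ((K₁ : Set G) ∪ (K₂ : Set G)).Finite := by
    exact Set.Finite.union (Set.toFinite _) (Set.toFinite _)
  have hLfin : Finite L := (hGlf _ hU).to_subtype
  set A : Subgroup L := K₁.subgroupOf L with hA
  set B : Subgroup L := K₂.subgroupOf L with hB
  set ψ : A ≃* B := (Subgroup.subgroupOfEquivOfLe hK1L).trans
    (e.trans (Subgroup.subgroupOfEquivOfLe hK2L).symm) with hψ
  have hcard : Nat.card (L ⧸ A) = Nat.card (L ⧸ B) := by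
    have hA' := Subgroup.card_eq_card_quotient_mul_card_subgroup A
    have hB' := Subgroup.card_eq_card_quotient_mul_card_subgroup B
    have hAB : Nat.card A = Nat.card B := Nat.card_congr ψ.toEquiv
    have hpos : 0 < Nat.card A := Nat.card_pos
    apply Nat.eq_of_mul_eq_mul_right hpos
    rw [← hA', hAB, ← hB']
  obtain ⟨q⟩ := Finite.card_eq.mp hcard
  set σe : Equiv.Perm L := ⟨twist A B q ψ, twist B A q.symm ψ.symm,
    twist_twist A B q ψ, fun y => by simpa using twist_twist B A q.symm ψ.symm y⟩ with hσe
  set rreg : L →* Equiv.Perm L :=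
    { toFun := fun g => Equiv.mulRight g⁻¹
      map_one' := by ext z; simp
      map_mul' := fun a b => by ext z; simp [mul_assoc] } with hrreg
  have hrreg_inj : Function.Injective rreg := by
    intro a b hab
    have h := congrArg (fun (f : Equiv.Perm L) => f 1) hab
    simp only [hrreg, MonoidHom.coe_mk, OneHom.coe_mk, Equiv.coe_mulRight, one_mul] at h
    exact inv_injective h
  obtain ⟨Ψ, hΨinj, hΨ⟩ := hGE L (Equiv.Perm L) rreg hrreg_inj L.subtype
    (Subgroup.subtype_injective L)
  refine ⟨Ψ σe, ?_⟩
  have hconj : ∀ a : A, σe * rreg (a : L) * σe⁻¹ = rreg ((ψ a : B) : L) := by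
    intro a
    refine Equiv.ext fun x => ?_
    show twist A B q ψ ((σe.symm x) * (((a⁻¹ : A) : L))) = x * (((ψ a : B) : L))⁻¹
    rw [twist_mul A B q ψ (σe.symm x) a⁻¹]
    show σe (σe.symm x) * ((ψ a⁻¹ : B) : L) = x * (((ψ a : B) : L))⁻¹
    rw [Equiv.apply_symm_apply, map_inv]
    rfl
  have hg : ∀ (x : G) (hx : x ∈ K₁), Ψ σe * x * (Ψ σe)⁻¹ = ((e ⟨x, hx⟩ : K₂) : G) := by
    intro x hx
    have hxL : x ∈ L := hK1L hx
    have hxA : (⟨x, hxL⟩ : L) ∈ A := by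
      rw [hA, Subgroup.mem_subgroupOf]; exact hx
    set a : A := ⟨⟨x, hxL⟩, hxA⟩ with ha
    have key := congrArg Ψ (hconj a)
    rw [map_mul, map_mul, hΨ, hΨ, map_inv] at key
    have hcoe1 : L.subtype ((a : L)) = x := rfl
    have hcoe2 : L.subtype (((ψ a : B) : L)) = ((e ⟨x, hx⟩ : K₂) : G) := rfl
    rw [hcoe1, hcoe2] at key
    exact key
  ext y
  simp only [Subgroup.mem_map, MulEquiv.toMonoidHom_eq_coe, MonoidHom.coe_coe, MulAut.conj_apply]
  constructor
  · rintro ⟨x, hx, rfl⟩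
    rw [hg x hx]
    exact (e ⟨x, hx⟩).2
  · intro hy
    refine ⟨((e.symm ⟨y, hy⟩ : K₁) : G), (e.symm ⟨y, hy⟩).2, ?_⟩
    rw [hg _ (e.symm ⟨y, hy⟩).2]
    have : (⟨((e.symm ⟨y, hy⟩ : K₁) : G), (e.symm ⟨y, hy⟩).2⟩ : K₁) = e.symm ⟨y, hy⟩ :=
      Subtype.ext rfl
    rw [this, MulEquiv.apply_symm_apply]


/-- A countable locally finite group with property (E) contains every countable
locally finite group, and any two isomorphic finite subgroups of it are conjugate. -/
theorem stmt_6 (G : Type) [Group G] [Countable G]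
    (hGlf : LocallyFiniteGrp G) (hGE : PropertyE G) :
    (∀ (H : Type) [Group H] [Countable H], LocallyFiniteGrp H →
      ∃ f : H →* G, Function.Injective f) ∧
    (∀ K₁ K₂ : Subgroup G, Finite K₁ → Finite K₂ → Nonempty (K₁ ≃* K₂) →
      ∃ g : G, K₁.map (MulAut.conj g).toMonoidHom = K₂) := by
  constructor
  · intro H _ _ hH
    exact embeds_of_propertyE hGE H hH
  · rintro K₁ K₂ h1 h2 ⟨e⟩
    exact conj_of_iso hGlf hGE K₁ K₂ h1 h2 e
end

section
/- A group G is MIF if and only if for every n ≥ 1, G is n-MIF; moreover 1-MIF implies k-MIF for every k: if w₁,…,w_k ∈ G * Fₙ ∖ G and G has no nontrivial mixed identity, then there exist h₁,…,hₙ ∈ G with w_i(h₁,…,hₙ) ≠ 1 for all i = 1,…,k. -/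
/-- Words in the free product `G * Fₙ` of `G` with the free group on `n` generators. -/
abbrev MixedWord (G : Type*) [Group G] (n : ℕ) :=
  Monoid.Coprod G (FreeGroup (Fin n))

/-- Evaluation of a mixed word, mapping the constants through `f` and substituting
`h i` for the `i`-th variable. -/
def MixedWord.evalHom {G H : Type*} [Group G] [Group H] {n : ℕ}
    (f : G →* H) (h : Fin n → H) (w : MixedWord G n) : H :=
  Monoid.Coprod.lift f (FreeGroup.lift h) w

/-- Evaluation of a mixed word over `G` at `h : Fin n → G`. -/
def MixedWord.eval {G : Type*} [Group G] {n : ℕ} (h : Fin n → G)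
    (w : MixedWord G n) : G :=
  w.evalHom (MonoidHom.id G) h

/-- A word `w ∈ G * Fₙ` is nontrivial if it does not lie in (the canonical copy of) `G`. -/
def MixedWord.IsNontrivial {G : Type*} [Group G] {n : ℕ} (w : MixedWord G n) : Prop :=
  w ∉ (Monoid.Coprod.inl : G →* MixedWord G n).range

/-- `G` is mixed identity free: no nontrivial word in `G * Fₙ` vanishes identically. -/
def MIF (G : Type*) [Group G] : Prop :=
  ∀ (n : ℕ) (w : MixedWord G n), w.IsNontrivial → ∃ h : Fin n → G, w.eval h ≠ 1

/-- `G` is `k`-MIF: any `k` nontrivial words in `G * Fₙ` can be simultaneously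
made nontrivial by a single substitution. -/
def kMIF (G : Type*) [Group G] (k : ℕ) : Prop :=
  ∀ (n : ℕ) (w : Fin k → MixedWord G n), (∀ i, (w i).IsNontrivial) →
    ∃ h : Fin n → G, ∀ i, (w i).eval h ≠ 1

/-!
Given `w₁, …, w_k ≠ 1` in `G * Fₙ`, adjoin a new variable `x` and form the iterated commutator
`W = ⁅⋯⁅⁅w₁, w₁ ^ x⁆, w₂ ^ x²⁆, ⋯, w_k ^ x^k⁆` in `G * Fₙ₊₁ ≤ (G * Fₙ) * ⟨x⟩`. By induction on `k`,
the reduced form of `W` in this free product is `B x^k` with `B` beginning and ending in `G * Fₙ`,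
so `W ∉ G` (repeating `w₁` guarantees at least one conjugate, even for `k = 1`). A substitution
with `W(h) ≠ 1` then makes every `wᵢ(h)` nontrivial, since a commutator with `1` is trivial.
-/

open scoped commutatorElement

section IterCommutator

variable {H K : Type*} [Group H] [Group K]

/-- `iterCommutator x e b [u₁, …, uₘ] = ⁅⋯⁅⁅e, u₁ ^ x^(b+1)⁆, u₂ ^ x^(b+2)⁆, ⋯, uₘ ^ x^(b+m)⁆`,
where `u ^ y = y⁻¹ * u * y`. -/
def iterCommutator (x : H) : H → ℕ → List H → H
  | e, _, [] => e
  | e, b, u :: l => iterCommutator x ⁅e, (x ^ (b + 1))⁻¹ * u * x ^ (b + 1)⁆ (b + 1) l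

theorem ne_one_of_iterCommutator_ne_one {x e : H} {b : ℕ} {l : List H}
    (h : iterCommutator x e b l ≠ 1) : e ≠ 1 ∧ ∀ u ∈ l, u ≠ 1 := by
  induction l generalizing e b with
  | nil => exact ⟨h, by simp⟩
  | cons u l ih =>
    obtain ⟨hcomm, hl⟩ := ih h
    refine ⟨?_, List.forall_mem_cons.2 ⟨?_, hl⟩⟩ <;>
    · rintro rfl
      simp at hcomm

theorem map_iterCommutator (φ : H →* K) (x e : H) (b : ℕ) (l : List H) :
    φ (iterCommutator x e b l) = iterCommutator (φ x) (φ e) b (l.map φ) := by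
  induction l generalizing e b with
  | nil => rfl
  | cons u l ih =>
    simp only [iterCommutator, List.map_cons, ih, map_commutatorElement, map_mul, map_inv, map_pow]

end IterCommutator

theorem pow_ne_one_of_not_isOfFinOrder {M : Type*} [Monoid M] {x : M} (hx : ¬IsOfFinOrder x)
    {m : ℕ} (hm : m ≠ 0) : x ^ m ≠ 1 :=
  fun h => hx (isOfFinOrder_iff_pow_eq_one.2 ⟨m, Nat.pos_of_ne_zero hm, h⟩)

namespace Monoid.CoprodI.NeWord

variable {ι : Type*} {M : ι → Type*} [∀ i, Monoid (M i)]

theorem prod_ne_of {i j k : ι} (hij : i ≠ j) (w : NeWord M i j) (m : M k) : w.prod ≠ of m := by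
  classical
  intro h
  have hw : w.toWord = of m • Word.empty :=
    Word.equiv.symm.injective <| by
      change w.prod = (of m • Word.empty).prod
      rw [Word.prod_smul, Word.prod_empty, mul_one, h]
  have hidx {l : ι} (a : M l) (ha : ⟨l, a⟩ ∈ w.toList) : l = k := by
    by_contra hlk
    rw [show w.toList = (of m • Word.empty).toList from congrArg Word.toList hw,
      Word.mem_smul_iff_of_ne hlk] at ha
    simp [Word.empty] at ha
  exact hij <| (hidx _ (List.mem_of_mem_head? w.toList_head?)).trans
    (hidx _ (List.mem_of_mem_getLast? w.toList_getLast?)).symm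

end Monoid.CoprodI.NeWord

universe u

abbrev pairFamily (A C : Type u) : Bool → Type u
  | false => A
  | true => C

instance (A C : Type u) [Group A] [Group C] : ∀ b, Group (pairFamily A C b)
  | false => ‹Group A›
  | true => ‹Group C›

/-- The free product `A * C`, presented through `Monoid.CoprodI` so that its reduced words
(`Monoid.CoprodI.NeWord`) are available. -/
abbrev PairCoprod (A C : Type u) [Group A] [Group C] : Type u := Monoid.CoprodI (pairFamily A C)

namespace PairCoprod

open Monoid.CoprodI

variable {A C : Type u} [Group A] [Group C]

abbrev inl : A →* PairCoprod A C := of (M := pairFamily A C) (i := false)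

abbrev inr : C →* PairCoprod A C := of (M := pairFamily A C) (i := true)

theorem exists_iterCommutator_eq {x : C} (hx : ¬IsOfFinOrder x) {l : List A}
    (hl : ∀ u ∈ l, u ≠ 1) (b : ℕ) (B : NeWord (pairFamily A C) false false) :
    ∃ B' : NeWord (pairFamily A C) false false,
      iterCommutator (inr x) (B.prod * inr x ^ b) b (l.map inl) =
        B'.prod * inr x ^ (b + l.length) := by
  induction l generalizing b B with
  | nil => exact ⟨B, rfl⟩
  | cons u l ih =>
    obtain ⟨hu, hl⟩ := List.forall_mem_cons.1 hl
    have hx₁ : x ≠ 1 := by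
      rintro rfl
      exact hx .one
    have hxb : (x ^ (b + 1))⁻¹ ≠ 1 :=
      inv_ne_one.2 (pow_ne_one_of_not_isOfFinOrder hx b.succ_ne_zero)
    have hft : false ≠ true := Bool.false_ne_true
    -- the reduced word `B x⁻¹ u x B⁻¹ x^(-(b+1)) u⁻¹`
    let B₂ : NeWord (pairFamily A C) false false :=
      (((((B.append hft (.singleton (i := true) x⁻¹ (inv_ne_one.2 hx₁))).append hft.symm
        (.singleton (i := false) u hu)).append hft
        (.singleton (i := true) x hx₁)).append hft.symm
        B.inv).append hft
        (.singleton (i := true) _ hxb)).append hft.symm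
        (.singleton (i := false) u⁻¹ (inv_ne_one.2 hu))
    have hcomm : ⁅B.prod * inr x ^ b, (inr x ^ (b + 1))⁻¹ * inl u * inr x ^ (b + 1)⁆ =
        B₂.prod * inr x ^ (b + 1) := by
      simp only [B₂, NeWord.append_prod, NeWord.prod_singleton, NeWord.inv_prod,
        commutatorElement_def, map_inv, map_pow, inl, inr]
      group
    obtain ⟨B', hB'⟩ := ih hl (b + 1) B₂
    refine ⟨B', ?_⟩
    rw [List.map_cons, iterCommutator, hcomm, hB', List.length_cons, add_assoc, add_comm 1]

theorem iterCommutator_ne_inl {x : C} (hx : ¬IsOfFinOrder x) {a : A} (ha : a ≠ 1) {l : List A}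
    (hl₀ : l ≠ []) (hl : ∀ u ∈ l, u ≠ 1) (a' : A) :
    iterCommutator (inr x) (inl a) 0 (l.map inl) ≠ inl a' := by
  obtain ⟨B, hB⟩ := exists_iterCommutator_eq hx hl 0 (.singleton (i := false) a ha)
  rw [NeWord.prod_singleton, pow_zero, mul_one, zero_add] at hB
  rw [hB, ← map_pow, ← NeWord.prod_singleton (i := true) _
    (pow_ne_one_of_not_isOfFinOrder hx (List.length_pos_iff.2 hl₀).ne'),
    ← NeWord.append_prod (hne := Bool.false_ne_true)]
  exact NeWord.prod_ne_of (M := pairFamily A C) (k := false) Bool.false_ne_true _ a'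

end PairCoprod

namespace MixedWord

variable {G H : Type*} [Group G] [Group H] {m n : ℕ}

theorem IsNontrivial.ne_one {w : MixedWord G n} (hw : w.IsNontrivial) : w ≠ 1 :=
  fun h => hw ⟨1, by rw [map_one, h]⟩

def substHom (f : G →* H) (h : Fin n → H) : MixedWord G n →* H :=
  Monoid.Coprod.lift f (FreeGroup.lift h)

def var (i : Fin n) : MixedWord G n :=
  Monoid.Coprod.inr (FreeGroup.of i)

def rename (e : Fin n → Fin m) : MixedWord G n →* MixedWord G m :=
  Monoid.Coprod.map (MonoidHom.id G) (FreeGroup.map e)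

@[simp] theorem substHom_var (f : G →* H) (h : Fin n → H) (i : Fin n) :
    substHom f h (var i) = h i := by
  simp [substHom, var]

theorem substHom_comp_rename (f : G →* H) (h : Fin m → H) (e : Fin n → Fin m) :
    (substHom f h).comp (rename e) = substHom f (h ∘ e) := by
  ext <;> simp [substHom, rename]

theorem substHom_inl_var (ψ : MixedWord G n →* H) :
    substHom (ψ.comp Monoid.Coprod.inl) (fun i => ψ (var i)) = ψ := by
  ext <;> simp [substHom, var]

end MixedWord

theorem MIF.of_kMIF_one {G : Type*} [Group G] (h : kMIF G 1) : MIF G := fun n w hw =>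
  (h n (fun _ => w) fun _ => hw).imp fun _ hh => hh 0

section

variable {G : Type} [Group G] {n : ℕ}

theorem MixedWord.isNontrivial_iterCommutator {w₀ : MixedWord G n} (h₀ : w₀ ≠ 1)
    {l : List (MixedWord G n)} (hl₀ : l ≠ []) (hl : ∀ w ∈ l, w ≠ 1) :
    (iterCommutator (var (Fin.last n)) (rename Fin.castSucc w₀) 0
      (l.map (rename Fin.castSucc))).IsNontrivial := by
  rintro ⟨g, hg⟩
  let x : Multiplicative ℤ := .ofAdd 1
  let φ : MixedWord G (n + 1) →* PairCoprod (MixedWord G n) (Multiplicative ℤ) :=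
    substHom (PairCoprod.inl.comp Monoid.Coprod.inl)
      (Fin.snoc (fun i => PairCoprod.inl (var i)) (PairCoprod.inr x))
  have hφ : φ.comp (rename Fin.castSucc) = PairCoprod.inl := by
    rw [substHom_comp_rename, Fin.snoc_comp_castSucc, substHom_inl_var]
  have hφx : φ (var (Fin.last n)) = PairCoprod.inr x := by
    simp [φ]
  refine PairCoprod.iterCommutator_ne_inl
    (not_isOfFinOrder_of_isMulTorsionFree (show x ≠ 1 by decide)) h₀ hl₀ hl
    (Monoid.Coprod.inl g) ?_
  have := congrArg φ hg
  rwa [map_iterCommutator, hφx, List.map_map, ← MonoidHom.coe_comp, hφ,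
    ← MonoidHom.comp_apply φ (rename Fin.castSucc), hφ, eq_comm] at this

theorem MIF.exists_forall_mem_eval_ne_one (hG : MIF G) (l : List (MixedWord G n))
    (hl : ∀ w ∈ l, w ≠ 1) : ∃ h : Fin n → G, ∀ w ∈ l, w.eval h ≠ 1 := by
  cases l with
  | nil => exact ⟨1, by simp⟩
  | cons w₀ l' =>
    obtain ⟨h, hh⟩ := hG (n + 1) _ (MixedWord.isNontrivial_iterCommutator
      (hl w₀ List.mem_cons_self) (List.cons_ne_nil w₀ l') hl)
    change MixedWord.substHom (MonoidHom.id G) h _ ≠ 1 at hh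
    rw [map_iterCommutator, List.map_map, ← MonoidHom.coe_comp,
      MixedWord.substHom_comp_rename] at hh
    exact ⟨Fin.init h, fun w hw =>
      (ne_one_of_iterCommutator_ne_one hh).2 _ (List.mem_map_of_mem hw)⟩

theorem MIF.to_kMIF (hG : MIF G) (k : ℕ) : kMIF G k := fun n w hw => by
  obtain ⟨h, hh⟩ := hG.exists_forall_mem_eval_ne_one (List.ofFn w)
    (List.forall_mem_ofFn_iff.2 fun i => (hw i).ne_one)
  exact ⟨h, fun i => hh _ (List.mem_ofFn.2 ⟨i, rfl⟩)⟩

end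

/-- A group is MIF iff it is `k`-MIF for every `k ≥ 1`; in particular, if `G` is MIF
then any finite family of nontrivial mixed words admits a common substitution making
all of them nontrivial. -/
theorem stmt_8 (G : Type) [Group G] :
    (MIF G ↔ ∀ k : ℕ, 1 ≤ k → kMIF G k) ∧
    (MIF G → ∀ (k n : ℕ) (w : Fin k → MixedWord G n), (∀ i, (w i).IsNontrivial) →
      ∃ h : Fin n → G, ∀ i, (w i).eval h ≠ 1) :=
  ⟨⟨fun hG k _ => hG.to_kMIF k, fun hk => .of_kMIF_one (hk 1 le_rfl)⟩, fun hG k => hG.to_kMIF k⟩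
end

section
/- A locally finite group G is ∞-MIF if and only if G is omnigenous. -/
/-- `G` is ∞-MIF: for any finite subgroup `G₁` of `G` (containing the constants) and
any infinite sequence of nontrivial words in `G₁ * Fₙ`, if some finite overgroup `Γ`
of `G₁` contains a substitution making all the words nontrivial, then so does `G`. -/
def InftyMIF (G : Type*) [Group G] : Prop :=
  ∀ (G₁ : Subgroup G), Finite G₁ →
    ∀ (n : ℕ) (w : ℕ → MixedWord G₁ n), (∀ i, (w i).IsNontrivial) →
    (∃ (Γ : Type) (_ : Group Γ), Finite Γ ∧
      ∃ f : G₁ →* Γ, Function.Injective f ∧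
        ∃ γ : Fin n → Γ, ∀ i, (w i).evalHom f γ ≠ 1) →
    ∃ h : Fin n → G, ∀ i, (w i).evalHom G₁.subtype h ≠ 1

/-- `G` is omnigenous: every isomorphism of a finite subgroup `G₁ ≤ G` with a subgroup
of a finite group `Γ` extends to a surjection onto `Γ` from some finite subgroup
`G₂ ≥ G₁` of `G`. -/
def Omnigenous (G : Type*) [Group G] : Prop :=
  ∀ (G₁ : Subgroup G), Finite G₁ →
    ∀ (Γ : Type) [Group Γ] [Finite Γ] (Ψ₁ : G₁ →* Γ), Function.Injective Ψ₁ →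
    ∃ (G₂ : Subgroup G) (hle : G₁ ≤ G₂) (Ψ₂ : G₂ →* Γ),
      Finite G₂ ∧ Function.Surjective Ψ₂ ∧
      ∀ x : G₁, Ψ₂ (Subgroup.inclusion hle x) = Ψ₁ x

/-! Omnigenity gives ∞-MIF by lifting a witness `γ` in `Γ` through the surjection `G₂ ↠ Γ`.
Conversely, with `n = |Γ|` and `γ : Fin n → Γ` onto, the words of `G₁ * Fₙ` that do not vanish
at `γ` form a countable family, so ∞-MIF gives `h` in `G` at which none of them vanishes. The
evaluation at `γ` then factors through the evaluation at `h`, whose image is the required `G₂`;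
it is generated by `G₁` and `h`, hence finite by local finiteness. -/

instance Monoid.Coprod.countable {M N : Type*} [Monoid M] [Monoid N] [Countable M]
    [Countable N] : Countable (Monoid.Coprod M N) :=
  have : Countable (FreeMonoid (M ⊕ N)) := inferInstanceAs (Countable (List (M ⊕ N)))
  Monoid.Coprod.mk_surjective.countable

theorem LocallyFiniteGrp.finite_closure {G : Type*} [Group G] (hlf : LocallyFiniteGrp G)
    {s : Set G} (hs : s.Finite) : Finite (Subgroup.closure s) :=
  (hlf s hs).to_subtype

namespace MixedWord

variable {G H K : Type*} [Group G] [Group H] [Group K] {n : ℕ}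

def evalMonoidHom (f : G →* H) (h : Fin n → H) : MixedWord G n →* H :=
  Monoid.Coprod.lift f (FreeGroup.lift h)

@[simp]
theorem evalMonoidHom_apply (f : G →* H) (h : Fin n → H) (w : MixedWord G n) :
    evalMonoidHom f h w = w.evalHom f h :=
  rfl

@[simp]
theorem evalHom_inl (f : G →* H) (h : Fin n → H) (g : G) :
    evalHom f h (Monoid.Coprod.inl g : MixedWord G n) = f g :=
  Monoid.Coprod.lift_apply_inl _ _ _

@[simp]
theorem evalHom_inr_of (f : G →* H) (h : Fin n → H) (j : Fin n) :
    evalHom f h (Monoid.Coprod.inr (FreeGroup.of j) : MixedWord G n) = h j := by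
  simp [evalHom]

theorem map_evalHom (φ : H →* K) (f : G →* H) (h : Fin n → H) (w : MixedWord G n) :
    φ (w.evalHom f h) = w.evalHom (φ.comp f) (φ ∘ h) := by
  have hfree : φ.comp (FreeGroup.lift h) = FreeGroup.lift (φ ∘ h) :=
    FreeGroup.ext_hom _ _ fun j => by simp
  change (φ.comp (evalMonoidHom f h)) w = evalMonoidHom (φ.comp f) (φ ∘ h) w
  rw [evalMonoidHom, Monoid.Coprod.comp_lift, hfree, evalMonoidHom]

theorem evalMonoidHom_surjective (f : G →* H) {h : Fin n → H} (hh : Function.Surjective h) :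
    Function.Surjective (evalMonoidHom f h) := fun y ↦
  let ⟨j, hj⟩ := hh y
  ⟨Monoid.Coprod.inr (FreeGroup.of j), by simp [hj]⟩

theorem range_evalMonoidHom_subtype (L : Subgroup G) (h : Fin n → G) :
    (evalMonoidHom L.subtype h).range = Subgroup.closure ((L : Set G) ∪ Set.range h) := by
  rw [evalMonoidHom, Monoid.Coprod.range_lift, Subgroup.range_subtype,
    FreeGroup.range_lift_eq_closure, Subgroup.closure_union, Subgroup.closure_eq]

end MixedWord

open MixedWord

section InftyMIF

variable {G : Type*} [Group G]

theorem InftyMIF.exists_forall_evalHom_ne_one (hm : InftyMIF G) {G₁ : Subgroup G} [Finite G₁]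
    {n : ℕ} {Γ : Type} [Group Γ] [Finite Γ] {f : G₁ →* Γ} (hf : Function.Injective f)
    {γ : Fin n → Γ} {W : Set (MixedWord G₁ n)} (hW : W.Countable)
    (hW_nontrivial : ∀ w ∈ W, w.IsNontrivial) (hWγ : ∀ w ∈ W, w.evalHom f γ ≠ 1) :
    ∃ h : Fin n → G, ∀ w ∈ W, w.evalHom G₁.subtype h ≠ 1 := by
  rcases W.eq_empty_or_nonempty with rfl | hW_nonempty
  · exact ⟨1, by simp⟩
  obtain ⟨w, rfl⟩ := hW.exists_eq_range hW_nonempty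
  obtain ⟨h, hh⟩ := hm G₁ ‹_› n w (fun i ↦ hW_nontrivial _ ⟨i, rfl⟩)
    ⟨Γ, _, ‹_›, f, hf, γ, fun i ↦ hWγ _ ⟨i, rfl⟩⟩
  exact ⟨h, Set.forall_mem_range.2 hh⟩

theorem InftyMIF.exists_ker_le (hm : InftyMIF G) {G₁ : Subgroup G} [Finite G₁] {n : ℕ}
    {Γ : Type} [Group Γ] [Finite Γ] {f : G₁ →* Γ} (hf : Function.Injective f) (γ : Fin n → Γ) :
    ∃ h : Fin n → G, (evalMonoidHom G₁.subtype h).ker ≤ (evalMonoidHom f γ).ker := by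
  obtain ⟨h, hh⟩ := hm.exists_forall_evalHom_ne_one hf
    (W := {w | w.IsNontrivial ∧ w.evalHom f γ ≠ 1}) (Set.to_countable _)
    (fun _ hw ↦ hw.1) (fun _ hw ↦ hw.2)
  refine ⟨h, fun w hw ↦ ?_⟩
  simp only [MonoidHom.mem_ker, evalMonoidHom_apply] at hw ⊢
  by_cases hw_nontrivial : w.IsNontrivial
  · by_contra hne
    exact hh w ⟨hw_nontrivial, hne⟩ hw
  · obtain ⟨g, rfl⟩ := not_not.mp hw_nontrivial
    have hg : g = 1 := G₁.subtype_injective (by simpa using hw)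
    rw [evalHom_inl, hg, map_one]

theorem InftyMIF.omnigenous (hlf : LocallyFiniteGrp G) (hm : InftyMIF G) : Omnigenous G := by
  intro G₁ _ Γ _ _ Ψ₁ hΨ₁
  obtain ⟨γ, hγ⟩ : ∃ γ : Fin (Nat.card Γ) → Γ, Function.Surjective γ :=
    ⟨_, (Finite.equivFin Γ).symm.surjective⟩
  obtain ⟨h, hker⟩ := hm.exists_ker_le hΨ₁ γ
  set φ := evalMonoidHom Ψ₁ γ
  set ψ := evalMonoidHom G₁.subtype h
  have hle : G₁ ≤ ψ.range := fun g hg ↦ ⟨Monoid.Coprod.inl ⟨g, hg⟩, by simp [ψ]⟩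
  let Ψ₂ : ψ.range →* Γ := ψ.rangeRestrict.liftOfSurjective ψ.rangeRestrict_surjective
    ⟨φ, by rwa [MonoidHom.ker_rangeRestrict]⟩
  have hΨ₂ (w : MixedWord G₁ _) : Ψ₂ (ψ.rangeRestrict w) = φ w :=
    ψ.rangeRestrict.liftOfRightInverse_comp_apply _ _ _ w
  refine ⟨ψ.range, hle, Ψ₂, ?_, ?_, fun x ↦ ?_⟩
  · rw [range_evalMonoidHom_subtype]
    exact hlf.finite_closure ((Set.toFinite _).union (Set.finite_range h))
  · refine .of_comp (g := ψ.rangeRestrict) ?_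
    simpa [Function.comp_def, hΨ₂] using evalMonoidHom_surjective Ψ₁ hγ
  · have hx : Subgroup.inclusion hle x = ψ.rangeRestrict (Monoid.Coprod.inl x) :=
      Subtype.ext (by simp [ψ])
    simp [hx, hΨ₂, φ]

theorem Omnigenous.inftyMIF (ho : Omnigenous G) : InftyMIF G := by
  rintro G₁ hG₁ n w - ⟨Γ, _, _, f, hf, γ, hγ⟩
  obtain ⟨G₂, hle, Ψ₂, -, hΨ₂, hext⟩ := ho G₁ hG₁ Γ f hf
  choose h hh using fun j ↦ hΨ₂ (γ j)
  refine ⟨fun j ↦ h j, fun i hi ↦ hγ i ?_⟩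
  have hΨ₂f : Ψ₂.comp (Subgroup.inclusion hle) = f := MonoidHom.ext hext
  have hwi : (w i).evalHom (Subgroup.inclusion hle) h = 1 := G₂.subtype_injective <| by
    rw [map_evalHom, Subgroup.subtype_comp_inclusion, map_one]
    exact hi
  have hΨ₂h : Ψ₂ ∘ h = γ := funext hh
  rw [← hΨ₂f, ← hΨ₂h, ← map_evalHom, hwi, map_one]

end InftyMIF

/-- A locally finite group is ∞-MIF iff it is omnigenous. -/
theorem stmt_10 (G : Type) [Group G] (hlf : LocallyFiniteGrp G) :
    InftyMIF G ↔ Omnigenous G :=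
  ⟨InftyMIF.omnigenous hlf, Omnigenous.inftyMIF⟩
end

section
/- Let Δ be a countable distance value set and let X be the universal countable Δ-metric space (the Fraïssé limit of finite Δ-metric spaces), characterized by the Urysohn property. Let A ⊆ X be finite, p a nontrivial 1-type over A realized by x and y (i.e. d(x,a) = d(y,a) for all a ∈ A, x,y ∉ A), and s ∈ Δ with s ≤ 2·d(x,A). Then there exist m ∈ ℕ and points x₀ = x, x₁, …, x_{m-1}, x_m = y in X, all realizing p, with d(x_{i-1}, x_i) = s for all i = 1,…,m. -/
/-- The Urysohn property for a Δ-metric space: every Katětov function over a finite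
subset is realized. -/
def UrysohnProp (Δ : Set ℝ) (X : Type*) [MetricSpace X] : Prop :=
  ∀ (A : Finset X) (f : X → ℝ), (∀ a ∈ A, f a ∈ Δ) →
    (∀ a ∈ A, ∀ b ∈ A, |f a - f b| ≤ dist a b ∧ dist a b ≤ f a + f b) →
    ∃ x : X, ∀ a ∈ A, dist x a = f a

/-! Let `u, y` realize the type of `x` over `A`. The Urysohn property applied to `A ∪ {u, y}`
gives a realization `w` with `d(u, w) = s` and `d(w, y) = r` as soon as `r ∈ Δ`,
`r ≤ 2 d(x, A)` and `s, r, d(u, y)` satisfy the triangle inequalities. If `d(u, y) ≤ 2 s`,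
take `r = s` and stop at `y`. If `k s < d(u, y) ≤ (k + 1) s` with `k ≥ 2`, take `r = k s`:
it lies in `Δ` as a sum of copies of `s` below `d(u, y) ∈ Δ`, and `r < d(u, y) ≤ 2 d(x, A)`.
Induction on `k` then joins `u` to `y`. -/

theorem Relation.ReflTransGen.exists_fin_chain {α : Type*} {r : α → α → Prop} {a b : α}
    (h : Relation.ReflTransGen r a b) :
    ∃ (m : ℕ) (z : Fin (m + 1) → α), z 0 = a ∧ z (Fin.last m) = b ∧
      ∀ i : Fin m, r (z i.castSucc) (z i.succ) := by
  induction h using Relation.ReflTransGen.head_induction_on with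
  | refl => exact ⟨0, fun _ => b, rfl, rfl, Fin.elim0⟩
  | head hac _ ih =>
    obtain ⟨m, z, hz0, hzm, hz⟩ := ih
    refine ⟨m + 1, Fin.cons _ z, rfl, by rw [← Fin.succ_last, Fin.cons_succ, hzm], ?_⟩
    refine Fin.cases ?_ fun i => ?_
    · simpa [hz0] using hac
    · simpa [← Fin.succ_castSucc] using hz i

namespace DistanceValueSet

variable {Δ : Set ℝ}

theorem add_mem_of_le (hΔ : DistanceValueSet Δ) {a b t : ℝ} (ha : a ∈ Δ) (hb : b ∈ Δ)
    (ht : t ∈ Δ) (hle : a + b ≤ t) : a + b ∈ Δ := by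
  by_cases hbdd : BddAbove Δ
  · have := hΔ.closed_bdd hbdd a ha b hb
    rwa [min_eq_left (hle.trans (le_csSup hbdd ht))] at this
  · exact hΔ.closed_unbdd hbdd a ha b hb

theorem nat_mul_mem_of_le (hΔ : DistanceValueSet Δ) {s t : ℝ} (hs : s ∈ Δ) (ht : t ∈ Δ)
    {k : ℕ} (hk : k ≠ 0) (hle : k * s ≤ t) : (k : ℝ) * s ∈ Δ := by
  induction k, Nat.one_le_iff_ne_zero.2 hk using Nat.le_induction with
  | base => simpa using hs
  | succ k hk ih =>
    have hs0 := hΔ.pos s hs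
    push_cast at hle ⊢
    rw [add_one_mul] at hle ⊢
    exact hΔ.add_mem_of_le (ih (by omega) (by linarith)) hs ht hle

end DistanceValueSet

section Katetov

variable {X : Type*} [MetricSpace X]

def IsKatetovOn (A : Finset X) (f : X → ℝ) : Prop :=
  ∀ a ∈ A, ∀ b ∈ A, |f a - f b| ≤ dist a b ∧ dist a b ≤ f a + f b

theorem isKatetovOn_dist (x : X) (A : Finset X) : IsKatetovOn A (dist x) :=
  fun a _ b _ => ⟨by simpa only [dist_comm x] using abs_dist_sub_le a b x,
    by simpa only [dist_comm x] using dist_triangle a x b⟩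

theorem IsKatetovOn.update_insert [DecidableEq X] {A : Finset X} {f : X → ℝ}
    (hf : IsKatetovOn A f) {c : X} (hc : c ∉ A) {v : ℝ} (hv : 0 ≤ v)
    (hcA : ∀ a ∈ A, |v - f a| ≤ dist c a ∧ dist c a ≤ v + f a) :
    IsKatetovOn (insert c A) (Function.update f c v) := by
  have hne : ∀ a ∈ A, a ≠ c := fun a ha h => hc (h ▸ ha)
  intro a ha b hb
  rw [Finset.mem_insert] at ha hb
  rcases ha with rfl | ha <;> rcases hb with rfl | hb
  · simp [hv]
  · simpa [hne b hb] using hcA b hb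
  · simpa [hne a ha, abs_sub_comm, dist_comm, add_comm] using hcA a ha
  · simpa [hne a ha, hne b hb] using hf a ha b hb

end Katetov

section Realizations

variable {X : Type*} [MetricSpace X] {A : Finset X} {x u y : X}

def realizations (A : Finset X) (x : X) : Set X :=
  {u | ∀ a ∈ A, dist u a = dist x a}

theorem self_mem_realizations : x ∈ realizations A x :=
  fun _ _ => rfl

theorem not_mem_of_mem_realizations (hx : x ∉ A) (hu : u ∈ realizations A x) : u ∉ A := by
  intro huA
  obtain rfl : x = u := dist_eq_zero.1 (by rw [← hu u huA, dist_self])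
  exact hx huA

theorem dist_le_two_mul_of_mem_realizations (hu : u ∈ realizations A x)
    (hy : y ∈ realizations A x) {a : X} (ha : a ∈ A) : dist u y ≤ 2 * dist x a := by
  linarith [dist_triangle_right u y a, hu a ha, hy a ha]

variable {Δ : Set ℝ}

theorem UrysohnProp.exists_mem_realizations_dist_eq_dist_eq (hU : UrysohnProp Δ X)
    (hX : IsDeltaMetric Δ X) (hx : x ∉ A) (hu : u ∈ realizations A x)
    (hy : y ∈ realizations A x) (huy : u ≠ y) {s r : ℝ} (hs : s ∈ Δ) (hr : r ∈ Δ)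
    (hs2 : ∀ a ∈ A, s ≤ 2 * dist x a) (hr2 : ∀ a ∈ A, r ≤ 2 * dist x a)
    (hlow : |s - r| ≤ dist u y) (hupp : dist u y ≤ s + r) :
    ∃ w ∈ realizations A x, dist w u = s ∧ dist w y = r := by
  classical
  have hs0 : 0 ≤ s := by linarith [le_abs_self (s - r), neg_abs_le (s - r)]
  have hr0 : 0 ≤ r := by linarith [le_abs_self (s - r), neg_abs_le (s - r)]
  have hyA := not_mem_of_mem_realizations hx hy
  have huyA : u ∉ insert y A := by
    simpa [huy] using not_mem_of_mem_realizations hx hu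
  have hne : ∀ a ∈ A, a ≠ y := fun a ha h => hyA (h ▸ ha)
  have htype : ∀ c ∈ realizations A x, ∀ v, 0 ≤ v → (∀ a ∈ A, v ≤ 2 * dist x a) →
      ∀ a ∈ A, |v - dist x a| ≤ dist c a ∧ dist c a ≤ v + dist x a := by
    intro c hc v hv hv2 a ha
    rw [hc a ha, abs_sub_le_iff]
    have := dist_nonneg (x := x) (y := a)
    exact ⟨⟨by linarith [hv2 a ha], by linarith⟩, by linarith⟩
  set f := Function.update (Function.update (dist x) y r) u s
  have hfK : IsKatetovOn (insert u (insert y A)) f := by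
    refine ((isKatetovOn_dist x A).update_insert hyA hr0 (htype y hy r hr0 hr2)).update_insert
      huyA hs0 fun b hb => ?_
    rcases Finset.mem_insert.1 hb with rfl | hb
    · simpa using ⟨hlow, hupp⟩
    · simpa [hne b hb] using htype u hu s hs0 hs2 b hb
  have hfΔ : ∀ a ∈ insert u (insert y A), f a ∈ Δ := by
    intro a ha
    rcases Finset.mem_insert.1 ha with rfl | ha
    · simpa [f] using hs
    rcases Finset.mem_insert.1 ha with rfl | ha
    · simpa [f, huy.symm] using hr
    · have hau : a ≠ u := fun h => huyA (h ▸ Finset.mem_insert_of_mem ha)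
      simpa [f, hau, hne a ha] using hX x a fun h => hx (h ▸ ha)
  obtain ⟨w, hw⟩ := hU _ f hfΔ hfK
  refine ⟨w, fun a ha => ?_, by simpa [f] using hw u (by simp), ?_⟩
  · have hau : a ≠ u := fun h => huyA (h ▸ Finset.mem_insert_of_mem ha)
    simpa [f, hau, hne a ha] using hw a (by simp [ha])
  · simpa [f, huy.symm] using hw y (by simp)

theorem reflTransGen_of_dist_le (hΔ : DistanceValueSet Δ) (hU : UrysohnProp Δ X)
    (hX : IsDeltaMetric Δ X) (hx : x ∉ A) {s : ℝ} (hs : s ∈ Δ)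
    (hs2 : ∀ a ∈ A, s ≤ 2 * dist x a) (y : realizations A x) (n : ℕ) :
    ∀ u : realizations A x, dist (u : X) y ≤ (n + 2) * s →
      Relation.ReflTransGen (fun u w : realizations A x => dist (u : X) w = s) u y := by
  have hs0 := hΔ.pos s hs
  induction n with
  | zero =>
    intro u hle
    by_cases huy : u = y
    · rw [huy]
    obtain ⟨w, hw, hwu, hwy⟩ := hU.exists_mem_realizations_dist_eq_dist_eq hX hx u.2 y.2
      (Subtype.coe_ne_coe.2 huy) hs hs hs2 hs2 (by simp) (by simpa [two_mul] using hle)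
    exact .head (b := ⟨w, hw⟩) (by rwa [dist_comm]) (.single hwy)
  | succ n ih =>
    intro u hle
    rcases le_or_gt (dist (u : X) y) ((n + 2) * s) with hle' | hle'
    · exact ih u hle'
    have huy : (u : X) ≠ y := fun h => by rw [h, dist_self] at hle'; nlinarith
    have hrΔ : ((n + 2 : ℕ) : ℝ) * s ∈ Δ :=
      hΔ.nat_mul_mem_of_le hs (hX _ _ huy) (by omega) (by push_cast; linarith)
    push_cast at hrΔ
    have hr2 : ∀ a ∈ A, (n + 2) * s ≤ 2 * dist x a := fun a ha =>
      hle'.le.trans (dist_le_two_mul_of_mem_realizations u.2 y.2 ha)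
    obtain ⟨w, hw, hwu, hwy⟩ := hU.exists_mem_realizations_dist_eq_dist_eq hX hx u.2 y.2 huy
      hs hrΔ hs2 hr2 (by rw [abs_sub_le_iff]; constructor <;> nlinarith)
      (by push_cast at hle; linarith)
    exact .head (b := ⟨w, hw⟩) (by rwa [dist_comm]) (ih ⟨w, hw⟩ hwy.le)

theorem reflTransGen_dist_eq (hΔ : DistanceValueSet Δ) (hU : UrysohnProp Δ X)
    (hX : IsDeltaMetric Δ X) (hx : x ∉ A) {s : ℝ} (hs : s ∈ Δ)
    (hs2 : ∀ a ∈ A, s ≤ 2 * dist x a) (u y : realizations A x) :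
    Relation.ReflTransGen (fun u w : realizations A x => dist (u : X) w = s) u y := by
  obtain ⟨n, hn⟩ := exists_nat_ge (dist (u : X) y / s)
  refine reflTransGen_of_dist_le hΔ hU hX hx hs hs2 y n u ?_
  have hs0 := hΔ.pos s hs
  rw [div_le_iff₀ hs0] at hn
  linarith

end Realizations

theorem stmt_13_general (Δ : Set ℝ) (hΔ : DistanceValueSet Δ)
    (X : Type) [MetricSpace X]
    (hX : IsDeltaMetric Δ X) (hU : UrysohnProp Δ X)
    (A : Finset X) (x y : X) (hx : x ∉ A)
    (htype : ∀ a ∈ A, dist x a = dist y a)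
    (s : ℝ) (hs : s ∈ Δ) (hsle : ∀ a ∈ A, s ≤ 2 * dist x a) :
    ∃ (m : ℕ) (z : Fin (m + 1) → X), z 0 = x ∧ z (Fin.last m) = y ∧
      (∀ (i : Fin (m + 1)), ∀ a ∈ A, dist (z i) a = dist x a) ∧
      ∀ i : Fin m, dist (z i.castSucc) (z i.succ) = s := by
  obtain ⟨m, z, hz0, hzm, hz⟩ := (reflTransGen_dist_eq hΔ hU hX hx hs hsle
    ⟨x, self_mem_realizations⟩ ⟨y, fun a ha => (htype a ha).symm⟩).exists_fin_chain
  exact ⟨m, fun i => z i, congrArg Subtype.val hz0, congrArg Subtype.val hzm,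
    fun i => (z i).2, hz⟩

/-- In the universal countable Δ-metric space, any two realizations `x, y` of a
nontrivial 1-type over a finite set `A` can be joined by a chain of realizations with
consecutive distances equal to any `s ∈ Δ` with `s ≤ 2 d(x, A)`. -/
theorem stmt_13 (Δ : Set ℝ) (hΔ : DistanceValueSet Δ)
    (X : Type) [MetricSpace X] [Countable X]
    (hX : IsDeltaMetric Δ X) (hU : UrysohnProp Δ X)
    (A : Finset X) (hA : A.Nonempty) (x y : X) (hx : x ∉ A) (hy : y ∉ A)
    (htype : ∀ a ∈ A, dist x a = dist y a)
    (s : ℝ) (hs : s ∈ Δ) (hsle : ∀ a ∈ A, s ≤ 2 * dist x a) :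
    ∃ (m : ℕ) (z : Fin (m + 1) → X), z 0 = x ∧ z (Fin.last m) = y ∧
      (∀ (i : Fin (m + 1)), ∀ a ∈ A, dist (z i) a = dist x a) ∧
      ∀ i : Fin m, dist (z i.castSucc) (z i.succ) = s :=
  stmt_13_general Δ hΔ X hX hU A x y hx htype s hs hsle
end

section
/- Let X be a finite set with a metric taking a single nonzero value (so Iso(X) = Sym(X)). Fix a linear order < on X. For each partial bijection p of X, let φ(p) be the extension of p by the unique <-order-preserving bijection between X ∖ dom(p) and X ∖ rng(p). Then φ is a strongly coherent S-extension: each φ(p) is a permutation of X extending p, φ(p⁻¹) = φ(p)⁻¹, and whenever p∘q = r (with rng(q) = dom(p)), we have φ(p)∘φ(q) = φ(r). -/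
/-!
Extend `p` by the increasing bijection `dom pᶜ → rng pᶜ`. A permutation of a finite linear
order that agrees with `p` on `dom p` and is monotone on `dom pᶜ` is necessarily this extension,
since a strictly monotone map out of a well-order is determined by its range. Both
`φ p * φ q` and `φ (q.trans p)` have these properties for `q.trans p`, and `φ p.symm * φ p`
and `1` both have them for `p.trans p.symm`, which gives coherence and `φ p.symm = (φ p)⁻¹`.
Since all nonzero distances are equal, every permutation is an isometry.
-/

open Set Function

theorem isometry_of_injective_of_dist_eq_const {X Y : Type*} [PseudoMetricSpace X]
    [PseudoMetricSpace Y] {c : ℝ} (hX : ∀ x y : X, x ≠ y → dist x y = c)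
    (hY : ∀ x y : Y, x ≠ y → dist x y = c) {f : X → Y} (hf : Injective f) : Isometry f := by
  refine Isometry.of_dist_eq fun x y => ?_
  rcases eq_or_ne x y with rfl | hne
  · simp
  · rw [hX x y hne, hY _ _ (hf.ne hne)]

namespace PartialEquiv

variable {X : Type*}

theorem image_compl_source_of_eqOn (p : PartialEquiv X X) {σ : Equiv.Perm X}
    (hσ : EqOn σ p p.source) : σ '' p.sourceᶜ = p.targetᶜ := by
  rw [Equiv.image_compl, hσ.image_eq, p.image_source_eq_target]

theorem trans_source_of_target_eq {p q : PartialEquiv X X} (h : q.target = p.source) :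
    (q.trans p).source = q.source := by
  rw [trans_source, inter_eq_left]
  exact fun x hx => h ▸ q.map_source hx

section Finite

variable [Finite X]

attribute [local instance] Fintype.ofFinite

open Classical in
theorem card_compl_source (p : PartialEquiv X X) :
    Fintype.card ↥p.sourceᶜ = Fintype.card ↥p.targetᶜ := by
  have h := Fintype.card_congr (p.bijOn.equiv p)
  rw [Fintype.card_compl_set, Fintype.card_compl_set, h]

variable [LinearOrder X]

theorem perm_eq_of_eqOn_of_monotoneOn (p : PartialEquiv X X) {σ τ : Equiv.Perm X}
    (hσ : EqOn σ p p.source) (hτ : EqOn τ p p.source)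
    (hσ_mono : MonotoneOn σ p.sourceᶜ) (hτ_mono : MonotoneOn τ p.sourceᶜ) : σ = τ := by
  have restrict_strictMono : ∀ ρ : Equiv.Perm X, MonotoneOn ρ p.sourceᶜ →
      StrictMono (ρ ∘ ((↑) : ↥p.sourceᶜ → X)) := fun ρ hρ =>
    Monotone.strictMono_of_injective (fun a b hab => hρ a.2 b.2 hab)
      (ρ.injective.comp Subtype.val_injective)
  have restrict_eq : σ ∘ ((↑) : ↥p.sourceᶜ → X) = τ ∘ (↑) := by
    rw [← (restrict_strictMono σ hσ_mono).range_inj (restrict_strictMono τ hτ_mono),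
      range_comp, range_comp, Subtype.range_coe, image_compl_source_of_eqOn p hσ,
      image_compl_source_of_eqOn p hτ]
  ext x
  by_cases hx : x ∈ p.source
  · rw [hσ hx, hτ hx]
  · exact congrFun restrict_eq ⟨x, hx⟩

open Classical in
noncomputable def complOrderIso (p : PartialEquiv X X) : ↥p.sourceᶜ ≃o ↥p.targetᶜ :=
  (Fintype.orderIsoFinOfCardEq ↥p.sourceᶜ p.card_compl_source).symm.trans
    (Fintype.orderIsoFinOfCardEq ↥p.targetᶜ rfl)

open Classical in
noncomputable def orderExtend (p : PartialEquiv X X) : Equiv.Perm X :=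
  (Equiv.Set.sumCompl p.source).symm.trans
    ((Equiv.sumCongr (p.bijOn.equiv p) p.complOrderIso.toEquiv).trans
      (Equiv.Set.sumCompl p.target))

theorem orderExtend_apply_of_mem (p : PartialEquiv X X) {x : X} (hx : x ∈ p.source) :
    p.orderExtend x = p x := by
  classical
  simp [orderExtend, Equiv.Set.sumCompl_symm_apply_of_mem hx, BijOn.equiv, Equiv.ofBijective]

theorem orderExtend_apply_of_notMem (p : PartialEquiv X X) {x : X} (hx : x ∉ p.source) :
    p.orderExtend x = p.complOrderIso ⟨x, hx⟩ := by
  classical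
  simp [orderExtend, Equiv.Set.sumCompl_symm_apply_of_notMem hx]

theorem eqOn_orderExtend (p : PartialEquiv X X) : EqOn p.orderExtend p p.source :=
  fun _ hx => p.orderExtend_apply_of_mem hx

theorem monotoneOn_orderExtend (p : PartialEquiv X X) :
    MonotoneOn p.orderExtend p.sourceᶜ := fun x hx y hy hxy => by
  rw [p.orderExtend_apply_of_notMem hx, p.orderExtend_apply_of_notMem hy]
  exact p.complOrderIso.monotone (show (⟨x, hx⟩ : ↥p.sourceᶜ) ≤ ⟨y, hy⟩ from hxy)

theorem orderExtend_apply_notMem_target (p : PartialEquiv X X) {x : X} (hx : x ∉ p.source) :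
    p.orderExtend x ∉ p.target := by
  rw [← mem_compl_iff, ← p.image_compl_source_of_eqOn p.eqOn_orderExtend]
  exact mem_image_of_mem _ hx

theorem eq_orderExtend (p : PartialEquiv X X) {σ : Equiv.Perm X} (hσ : EqOn σ p p.source)
    (hσ_mono : MonotoneOn σ p.sourceᶜ) : σ = p.orderExtend :=
  p.perm_eq_of_eqOn_of_monotoneOn hσ p.eqOn_orderExtend hσ_mono p.monotoneOn_orderExtend

theorem orderExtend_trans {p q : PartialEquiv X X} (h : q.target = p.source) :
    (q.trans p).orderExtend = p.orderExtend * q.orderExtend := by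
  have hs := trans_source_of_target_eq h
  refine ((q.trans p).eq_orderExtend (fun x hx => ?_) ?_).symm
  · have hq : x ∈ q.source := hs ▸ hx
    rw [Equiv.Perm.mul_apply, q.orderExtend_apply_of_mem hq,
      p.orderExtend_apply_of_mem (h ▸ q.map_source hq)]
    rfl
  · rw [hs]
    exact p.monotoneOn_orderExtend.comp q.monotoneOn_orderExtend
      fun x hx => h ▸ q.orderExtend_apply_notMem_target hx

theorem orderExtend_symm (p : PartialEquiv X X) : p.symm.orderExtend = p.orderExtend⁻¹ := by
  have hs : (p.trans p.symm).source = p.source := trans_source_of_target_eq rfl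
  have hid : (1 : Equiv.Perm X) = (p.trans p.symm).orderExtend :=
    (p.trans p.symm).eq_orderExtend (fun x hx => (p.left_inv (hs ▸ hx)).symm)
      fun _ _ _ _ hxy => hxy
  exact eq_inv_of_mul_eq_one_left ((orderExtend_trans (p := p.symm) rfl).symm.trans hid.symm)

end Finite

end PartialEquiv

theorem stmt_17_general (X : Type) [Finite X] [LinearOrder X] [MetricSpace X]
    (c : ℝ) (hX : ∀ x y : X, x ≠ y → dist x y = c) :
    ∃ φ : PartialEquiv X X → Equiv.Perm X,
      (∀ p : PartialEquiv X X, Isometry (φ p)) ∧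
      (∀ p : PartialEquiv X X, ∀ x ∈ p.source, φ p x = p x) ∧
      (∀ p : PartialEquiv X X, φ p.symm = (φ p)⁻¹) ∧
      (∀ p : PartialEquiv X X, ∀ x ∉ p.source, φ p x ∉ p.target) ∧
      (∀ p : PartialEquiv X X, ∀ x ∉ p.source, ∀ y ∉ p.source, x ≤ y → φ p x ≤ φ p y) ∧
      (∀ p q : PartialEquiv X X, q.target = p.source →
        φ (q.trans p) = φ p * φ q) :=
  ⟨PartialEquiv.orderExtend,
    fun p => isometry_of_injective_of_dist_eq_const hX hX p.orderExtend.injective,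
    fun p _ hx => p.orderExtend_apply_of_mem hx,
    PartialEquiv.orderExtend_symm,
    fun p _ hx => p.orderExtend_apply_notMem_target hx,
    fun p _ hx _ hy hxy => p.monotoneOn_orderExtend hx hy hxy,
    fun _ _ h => PartialEquiv.orderExtend_trans h⟩

/-- On a finite metric space `X` with a single nonzero distance value (so that
isometries are exactly permutations), the order-preserving extension of partial
bijections is a strongly coherent S-extension: each partial bijection `p` extends to a
permutation `φ p` (an isometry) which is order-preserving between the complements of
the domain and range, with `φ p.symm = (φ p)⁻¹` and `φ (p ∘ q) = φ p * φ q` whenever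
`rng q = dom p`. -/
theorem stmt_17 (X : Type) [Finite X] [LinearOrder X] [MetricSpace X]
    (c : ℝ) (hc : 0 < c) (hX : ∀ x y : X, x ≠ y → dist x y = c) :
    ∃ φ : PartialEquiv X X → Equiv.Perm X,
      (∀ p : PartialEquiv X X, Isometry (φ p)) ∧
      (∀ p : PartialEquiv X X, ∀ x ∈ p.source, φ p x = p x) ∧
      (∀ p : PartialEquiv X X, φ p.symm = (φ p)⁻¹) ∧
      (∀ p : PartialEquiv X X, ∀ x ∉ p.source, φ p x ∉ p.target) ∧
      (∀ p : PartialEquiv X X, ∀ x ∉ p.source, ∀ y ∉ p.source, x ≤ y → φ p x ≤ φ p y) ∧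
      (∀ p q : PartialEquiv X X, q.target = p.source →
        φ (q.trans p) = φ p * φ q) :=
  stmt_17_general X c hX
end

section
/- Let Δ be a countable distance value set and G_Δ = Iso(U_Δ) with the permutation group topology. If A and B are finite subsets of U_Δ with A ∩ B = ∅ and the subgroup generated by the pointwise stabilizers G_A and G_B is dense in G_∅ = Iso(U_Δ), then any open subgroup V of Iso(U_Δ) all of whose orbits on U_Δ are infinite is equal to Iso(U_Δ). -/
open scoped Pointwise

/-- The pointwise stabilizer of a finite set under a group action. -/
def ptStab (G : Type*) {X : Type*} [Group G] [MulAction G X] (A : Finset X) :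
    Subgroup G :=
  ⨅ a ∈ A, MulAction.stabilizer G a

/-- Let `G` be (a topological group acting faithfully, isometrically and fully, as)
the isometry group of the universal countable Δ-metric space, with the permutation
group topology (pointwise stabilizers of finite sets are a basis of open subgroups).
Assuming Slutsky's theorem (the subgroup generated by the pointwise stabilizers of two
disjoint finite sets is dense), every open subgroup of `G` all of whose orbits on the
space are infinite is the whole group. -/
theorem stmt_19 (Δ : Set ℝ) (hΔ : DistanceValueSet Δ)
    (X : Type) [MetricSpace X] [Countable X]
    (hX : IsDeltaMetric Δ X) (hU : UrysohnProp Δ X)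
    (G : Type) [Group G] [TopologicalSpace G] [IsTopologicalGroup G] [MulAction G X]
    (hiso : ∀ (g : G) (x y : X), dist (g • x) (g • y) = dist x y)
    (hfaithful : ∀ g : G, (∀ x : X, g • x = x) → g = 1)
    (hfull : ∀ e : X ≃ᵢ X, ∃ g : G, ∀ x : X, g • x = e x)
    (hstabopen : ∀ A : Finset X, IsOpen ((ptStab G A : Subgroup G) : Set G))
    (hbasis : ∀ V : Subgroup G, IsOpen (V : Set G) → ∃ A : Finset X, ptStab G A ≤ V)
    (hSlutsky : ∀ A B : Finset X, Disjoint A B →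
      Dense ((ptStab G A ⊔ ptStab G B : Subgroup G) : Set G))
    (V : Subgroup G) (hV : IsOpen (V : Set G))
    (horb : ∀ x : X, ((fun g : G => g • x) '' (V : Set G)).Infinite) :
    V = ⊤ := by
  classical
  obtain ⟨A, hA⟩ := hbasis V hV
  have hmem : ∀ (C : Finset X) (g : G), g ∈ ptStab G C ↔ ∀ a ∈ C, g • a = a := by
    intro C g
    simp [ptStab, Subgroup.mem_iInf, MulAction.mem_stabilizer_iff]
  -- Neumann's lemma: there is `v ∈ V` with `v • A` disjoint from `A`.
  have hNeu : ∃ v : V, ∀ a ∈ A, ∀ a' ∈ A, (v : G) • a ≠ a' := by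
    by_contra hcon
    push_neg at hcon
    set P : X × X → Prop := fun p => ∃ w : V, (w : G) • p.1 = p.2 with hP
    set gg : X × X → V := fun p => if h : P p then h.choose else 1 with hgg
    have hcov : ⋃ p ∈ (A ×ˢ A).filter P,
        (gg p) • ((MulAction.stabilizer V p.1 : Subgroup V) : Set V) = Set.univ := by
      ext w
      simp only [Set.mem_univ, iff_true, Set.mem_iUnion]
      obtain ⟨a, ha, a', ha', hw⟩ := hcon w
      have hPa : P (a, a') := ⟨w, hw⟩
      refine ⟨(a, a'), Finset.mem_filter.mpr ⟨Finset.mem_product.mpr ⟨ha, ha'⟩, hPa⟩, ?_⟩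
      have hg : ((gg (a, a') : V) : G) • a = a' := by
        simp only [hgg, dif_pos hPa]
        exact hPa.choose_spec
      rw [Set.mem_smul_set_iff_inv_smul_mem, SetLike.mem_coe, MulAction.mem_stabilizer_iff]
      have : (((gg (a, a'))⁻¹ * w : V) : G) • (a : X) = a := by
        push_cast
        rw [mul_smul, hw, inv_smul_eq_iff]
        exact hg.symm
      simpa [Subgroup.smul_def] using this
    obtain ⟨p, hp, hfi, -⟩ := Subgroup.exists_index_le_card_of_leftCoset_cover hcov
    -- but the stabilizer of `p.1` in `V` has infinite index since the orbit is infinite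
    have horb' : (MulAction.orbit V p.1).Infinite := by
      have heq : MulAction.orbit V p.1 = (fun g : G => g • p.1) '' (V : Set G) := by
        ext x
        constructor
        · rintro ⟨⟨w, hwV⟩, rfl⟩
          exact ⟨w, hwV, rfl⟩
        · rintro ⟨w, hwV, rfl⟩
          exact ⟨⟨w, hwV⟩, rfl⟩
      rw [heq]
      exact horb p.1
    have hidx := MulAction.index_stabilizer V p.1
    rw [Set.Infinite.ncard horb'] at hidx
    exact hfi.index_ne_zero hidx
  obtain ⟨v, hv⟩ := hNeu
  set B : Finset X := A.image (fun a => (v : G) • a) with hB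
  have hdisj : Disjoint A B := by
    rw [Finset.disjoint_right]
    intro x hxB hxA
    obtain ⟨a, ha, rfl⟩ := Finset.mem_image.mp hxB
    exact hv a ha _ hxA rfl
  -- `ptStab G B ≤ V`
  have hBle : ptStab G B ≤ V := by
    intro g hg
    rw [hmem] at hg
    have hmid : (v : G)⁻¹ * g * (v : G) ∈ ptStab G A := by
      rw [hmem]
      intro a ha
      have hb : g • ((v : G) • a) = (v : G) • a :=
        hg _ (Finset.mem_image.mpr ⟨a, ha, rfl⟩)
      rw [mul_smul, mul_smul, hb, inv_smul_smul]
    have : (v : G) * ((v : G)⁻¹ * g * (v : G)) * (v : G)⁻¹ ∈ V :=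
      V.mul_mem (V.mul_mem v.2 (hA hmid)) (V.inv_mem v.2)
    simpa [mul_assoc] using this
  have hle : (ptStab G A ⊔ ptStab G B : Subgroup G) ≤ V := sup_le hA hBle
  have hdense : Dense ((V : Subgroup G) : Set G) :=
    (hSlutsky A B hdisj).mono hle
  have hclosed : IsClosed ((V : Subgroup G) : Set G) := V.isClosed_of_isOpen hV
  have huniv : ((V : Subgroup G) : Set G) = Set.univ := hclosed.closure_eq ▸ hdense.closure_eq
  exact SetLike.coe_injective (by rw [huniv, Subgroup.coe_top])
end
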